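/- arXiv:math/9712267 — 6 statements merged into one kernel-verified Lean document; each statement's English description precedes it below -/
import Mathlib

section
/- (Hook formula.) For every Young diagram λ with n = |λ| boxes, dim λ = n! · ∏_{b∈λ} h(b)^{-1}, where dim λ is the number of standard Young tableaux of shape λ and h(b) is the hook length of the box b. -/
/-- `ν` is obtained from `μ` by adding a single box (`μ ↗ ν`). -/
def YDCovers (μ ν : YoungDiagram) : Prop :=
  ∃ c ∉ μ.cells, ν.cells = insert c μ.cells

/-- `dim λ`: the number of standard Young tableaux of shape `λ`, i.e. the number of
chains `∅ = λ⁰ ↗ λ¹ ↗ ⋯ ↗ λⁿ = λ` in the Young lattice. -/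
noncomputable def dimYD (μ : YoungDiagram) : ℕ :=
  Nat.card {L : List YoungDiagram //
    List.Chain' YDCovers L ∧ L.head? = some ⊥ ∧ L.getLast? = some μ}

/-- The arm length `a(b) = λᵢ − j` of a box `b = (i,j)` (0-indexed). -/
def armLen (μ : YoungDiagram) (b : ℕ × ℕ) : ℕ := μ.rowLen b.1 - b.2 - 1

/-- The leg length `l(b) = λ′ⱼ − i` of a box `b = (i,j)` (0-indexed). -/
def legLen (μ : YoungDiagram) (b : ℕ × ℕ) : ℕ := μ.colLen b.2 - b.1 - 1

/-- The hook length `h(b) = a(b) + l(b) + 1`. -/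
def hookLen (μ : YoungDiagram) (b : ℕ × ℕ) : ℕ := armLen μ b + legLen μ b + 1

/-!
Both sides of the hook formula satisfy the branching rule `f ν = ∑_{μ ↗ ν} f μ`. For `dim`
this is cutting the last step off a chain. For `n! / H(ν)`, with `H` the product of the hook
lengths, it says `∑_c H(ν) / H(ν - c) = n` over the corners `c` of `ν`. Fix `m` at least the
number of rows and let `ℓᵢ = λᵢ + m - 1 - i`, a strictly decreasing sequence. The hook lengths of
row `i` together with the differences `ℓᵢ - ℓₖ` (`i < k < m`) are exactly `1, …, ℓᵢ`, so
`H(λ) · ∏_{i<k} (ℓᵢ - ℓₖ) = ∏ ℓᵢ!`. Removing the corner in row `r` lowers `ℓᵣ` by one, hence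
`H(ν) / H(ν - c) = ℓᵣ ∏_{j ≠ r} (ℓᵣ - 1 - ℓⱼ) / (ℓᵣ - ℓⱼ)`. The same expression vanishes for
the rows `r < m` without a corner, and Lagrange interpolation evaluates the sum over all `r < m` to
`∑ ℓᵣ - C(m, 2) = n`.
-/

section Chains

variable {α : Type*} {R : α → α → Prop}

theorem List.IsChain.add_length_le {f : α → ℕ} (hf : ∀ x y, R x y → f x < f y) {L : List α}
    (hL : L.IsChain R) {a b : α} (ha : L.head? = some a) (hb : L.getLast? = some b) :
    f a + L.length ≤ f b + 1 := by
  induction L generalizing a with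
  | nil => simp at ha
  | cons x t ih =>
    obtain rfl : x = a := by simpa using ha
    cases t with
    | nil => simp_all
    | cons y t =>
      rw [List.isChain_cons_cons] at hL
      have := ih hL.2 rfl (by simpa using hb)
      have := hf _ _ hL.1
      simp only [List.length_cons] at *
      omega

variable (R) in
def ChainFromTo (a b : α) : Type _ :=
  {L : List α // L.IsChain R ∧ L.head? = some a ∧ L.getLast? = some b}

namespace ChainFromTo

variable {a b c : α}

def snoc (L : ChainFromTo R a c) (h : R c b) : ChainFromTo R a b :=
  ⟨L.1 ++ [b], L.2.1.append (List.isChain_singleton b) (by simp [L.2.2.2, h]),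
    by simp [List.head?_append, L.2.2.1], by simp⟩

theorem snoc_bijective (hab : a ≠ b) :
    Function.Bijective fun p : Σ c : {c // R c b}, ChainFromTo R a c => p.2.snoc p.1.2 := by
  constructor
  · rintro ⟨⟨c, hc⟩, L, hL⟩ ⟨⟨c', hc'⟩, L', hL'⟩ h
    obtain rfl : L = L' := List.append_inj_left' (congrArg Subtype.val h) rfl
    obtain rfl : c = c' := Option.some.inj (hL.2.2.symm.trans hL'.2.2)
    rfl
  · rintro ⟨L, hchain, hhead, hlast⟩
    have hL := List.dropLast_append_getLast? b hlast
    obtain ⟨c, hc⟩ : ∃ c, L.dropLast.getLast? = some c := by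
      refine Option.isSome_iff_exists.mp (List.getLast?_isSome.mpr fun h => hab ?_)
      rw [← hL, h] at hhead
      simpa using hhead.symm
    rw [← hL, List.isChain_append] at hchain
    refine ⟨⟨⟨c, hchain.2.2 c hc b rfl⟩, L.dropLast, hchain.1, ?_, hc⟩, Subtype.ext hL⟩
    rw [← hL] at hhead
    rwa [List.head?_append_of_ne_nil _ (by rintro h; simp [h] at hc)] at hhead

theorem natCard_eq_sum (hab : a ≠ b) (S : Finset α) (hS : ∀ c, c ∈ S ↔ R c b)
    (hfin : ∀ c ∈ S, Finite (ChainFromTo R a c)) :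
    Nat.card (ChainFromTo R a b) = ∑ c ∈ S, Nat.card (ChainFromTo R a c) := by
  let _ : Fintype {c // R c b} := Fintype.subtype S hS
  have _ (c : {c // R c b}) : Finite (ChainFromTo R a c) := hfin c ((hS c).mpr c.2)
  rw [← Nat.card_congr (Equiv.ofBijective _ (snoc_bijective hab)), Nat.card_sigma,
    Finset.sum_subtype S hS]

theorem natCard_self {f : α → ℕ} (hf : ∀ x y, R x y → f x < f y) :
    Nat.card (ChainFromTo R a a) = 1 := by
  refine Nat.card_eq_one_iff_exists.mpr
    ⟨⟨[a], List.isChain_singleton a, rfl, rfl⟩, fun ⟨L, hL, ha, ha'⟩ => Subtype.ext ?_⟩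
  have hL_ne : L ≠ [] := by rintro rfl; simp at ha
  have hlen : L.length = 1 := by
    have := hL.add_length_le hf ha ha'
    have := List.length_pos_iff.mpr hL_ne
    omega
  obtain ⟨x, rfl⟩ := List.length_eq_one_iff.mp hlen
  simpa using ha

theorem finite {f : α → ℕ} (hf : ∀ x y, R x y → f x < f y) (hpred : ∀ b, {c | R c b}.Finite)
    (b : α) : Finite (ChainFromTo R a b) := by
  induction hb : f b using Nat.strong_induction_on generalizing b with
  | _ n ih =>
  by_cases hab : a = b
  · subst hab
    exact Nat.finite_of_card_ne_zero (by rw [natCard_self hf]; exact one_ne_zero)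
  have : Finite {c // R c b} := (hpred b).to_subtype
  have (c : {c // R c b}) : Finite (ChainFromTo R a c) := ih _ (hb ▸ hf _ _ c.2) c rfl
  exact Finite.of_surjective _ (snoc_bijective hab).2

end ChainFromTo

end Chains

namespace Lagrange

open Polynomial Finset

variable {F ι : Type*} [Field F] [DecidableEq ι]

/-- Its degree is below `#s`, so Lagrange interpolation (`coeff_eq_sum`) reads the sum in
`sum_mul_prod_sub_one_div_sub` off its coefficient of `X ^ (#s - 1)`. -/
noncomputable def shiftDefect (s : Finset ι) (x : ι → F) : F[X] :=
  X * (nodal s (x · + 1) - nodal s x) + C (#s : F) * nodal s x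

theorem shiftDefect_insert {s : Finset ι} {i : ι} (hi : i ∉ s) (x : ι → F) :
    shiftDefect (insert i s) x =
      shiftDefect s x * (X - C (x i + 1)) + C (#s - x i) * nodal s x := by
  simp only [shiftDefect, nodal_insert_eq_nodal hi, card_insert_of_notMem hi, map_add, map_sub,
    map_natCast, C_1, Nat.cast_add, Nat.cast_one]
  ring

theorem coeff_shiftDefect (s : Finset ι) (x : ι → F) :
    (∀ k, #s ≤ k → (shiftDefect s x).coeff k = 0) ∧
      (shiftDefect s x).coeff (#s - 1) = ((#s).choose 2 : F) - ∑ j ∈ s, x j := by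
  induction s using Finset.induction_on with
  | empty => simp [shiftDefect]
  | insert i s hi ih =>
    obtain ⟨hhigh, hcoeff⟩ := ih
    have hnodal {k} (hk : #s < k) : (nodal s x).coeff k = 0 :=
      coeff_eq_zero_of_natDegree_lt (natDegree_nodal.trans_lt hk)
    rw [shiftDefect_insert hi, card_insert_of_notMem hi]
    refine ⟨fun k hk => ?_, ?_⟩
    · obtain ⟨k, rfl⟩ : ∃ k', k = k' + 1 := ⟨k - 1, by omega⟩
      rw [coeff_add, coeff_mul_X_sub_C, coeff_C_mul, hhigh k (by omega), hhigh (k + 1) (by omega),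
        hnodal (by omega)]
      ring
    · have htop : (nodal s x).coeff #s = 1 := by
        simpa [natDegree_nodal] using (nodal_monic (s := s) (v := x)).coeff_natDegree
      rw [Nat.add_sub_cancel, coeff_add, coeff_C_mul, htop, Nat.choose_succ_succ', sum_insert hi]
      rcases Nat.eq_zero_or_pos #s with hs | hs
      · simp [card_eq_zero.mp hs, shiftDefect]
      · obtain ⟨n, hn⟩ : ∃ n, #s = n + 1 := ⟨#s - 1, by omega⟩
        rw [hn, coeff_mul_X_sub_C, ← hn, ← Nat.sub_eq_of_eq_add hn, hcoeff, hhigh _ le_rfl]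
        push_cast [Nat.choose_one_right]
        ring

theorem eval_shiftDefect {s : Finset ι} {r : ι} (hr : r ∈ s) (x : ι → F) :
    (shiftDefect s x).eval (x r) = -(x r * ∏ j ∈ s.erase r, (x r - 1 - x j)) := by
  rw [shiftDefect, eval_add, eval_mul, eval_mul, eval_sub, eval_nodal_at_node hr, eval_nodal,
    ← mul_prod_erase s _ hr]
  simp only [eval_X, eval_C]
  ring_nf

theorem sum_mul_prod_sub_one_div_sub {s : Finset ι} {x : ι → F} (hx : Set.InjOn x s) :
    ∑ r ∈ s, x r * ∏ j ∈ s.erase r, (x r - 1 - x j) / (x r - x j) =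
      ∑ r ∈ s, x r - ((#s).choose 2 : F) := by
  have hdeg : (shiftDefect s x).degree < #s :=
    (degree_lt_iff_coeff_zero _ _).mpr (coeff_shiftDefect s x).1
  rw [← neg_sub, ← (coeff_shiftDefect s x).2, coeff_eq_sum hx hdeg, ← sum_neg_distrib]
  refine sum_congr rfl fun r hr => ?_
  rw [eval_shiftDefect hr, prod_div_distrib]
  ring

end Lagrange

section Vandermonde

open Finset

variable {R : Type*} [CommRing R]

def vandermondeProd (m : ℕ) (w : ℕ → R) : R :=
  ∏ i ∈ range m, ∏ k ∈ Ioo i m, (w i - w k)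

theorem vandermondeProd_succ (m : ℕ) (w : ℕ → R) :
    vandermondeProd (m + 1) w = vandermondeProd m w * ∏ i ∈ range m, (w i - w m) := by
  have hempty : Ioo m (m + 1) = ∅ := by ext; simp
  rw [vandermondeProd, vandermondeProd, prod_range_succ, hempty, prod_empty, mul_one,
    ← prod_mul_distrib]
  refine prod_congr rfl fun i hi => ?_
  have : Ioo i (m + 1) = insert m (Ioo i m) := by
    ext k
    simp only [mem_Ioo, mem_insert, mem_range] at hi ⊢
    omega
  rw [this, prod_insert right_notMem_Ioo, mul_comm]

theorem vandermondeProd_congr {m : ℕ} {w v : ℕ → R} (h : ∀ i < m, w i = v i) :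
    vandermondeProd m w = vandermondeProd m v :=
  prod_congr rfl fun i hi => prod_congr rfl fun k hk => by
    rw [h i (mem_range.mp hi), h k (mem_Ioo.mp hk).2]

theorem exists_vandermondeProd_update {m r : ℕ} (hr : r < m) (w : ℕ → R) :
    ∃ c, ∀ a, vandermondeProd m (Function.update w r a) =
      c * ∏ j ∈ (range m).erase r, (a - w j) := by
  induction m with
  | zero => omega
  | succ m ih =>
    rcases Nat.lt_succ_iff_lt_or_eq.mp hr with hr | rfl
    · obtain ⟨c, hc⟩ := ih hr
      refine ⟨c * ∏ i ∈ (range m).erase r, (w i - w m), fun a => ?_⟩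
      have hlast : ∏ i ∈ range m, (Function.update w r a i - w m) =
          (a - w m) * ∏ i ∈ (range m).erase r, (w i - w m) := by
        rw [← mul_prod_erase _ _ (mem_range.mpr hr), Function.update_self]
        congr 1
        exact prod_congr rfl fun i hi => by rw [Function.update_of_ne (ne_of_mem_erase hi)]
      rw [vandermondeProd_succ, hc, Function.update_of_ne hr.ne', hlast, range_add_one,
        erase_insert_of_ne hr.ne', prod_insert (by simp)]
      ring
    · refine ⟨(-1) ^ r * vandermondeProd r w, fun a => ?_⟩
      have hlast : ∏ i ∈ range r, (Function.update w r a i - Function.update w r a r) =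
          (-1) ^ r * ∏ i ∈ range r, (a - w i) := by
        have := pow_card_mul_prod (s := range r) (b := (-1 : R)) (f := fun i => a - w i)
        rw [card_range] at this
        rw [this]
        exact prod_congr rfl fun i hi => by
          rw [Function.update_self, Function.update_of_ne (mem_range.mp hi).ne]; ring
      rw [vandermondeProd_succ, vandermondeProd_congr fun i hi => Function.update_of_ne hi.ne a w,
        hlast, range_add_one, erase_insert notMem_range_self]
      ring

theorem vandermondeProd_update_mul {m r : ℕ} (hr : r < m) (w : ℕ → R) (a : R) :
    vandermondeProd m (Function.update w r a) * ∏ j ∈ (range m).erase r, (w r - w j) =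
      vandermondeProd m w * ∏ j ∈ (range m).erase r, (a - w j) := by
  obtain ⟨c, hc⟩ := exists_vandermondeProd_update hr w
  have hw := hc (w r)
  rw [Function.update_eq_self] at hw
  rw [hc, hw]
  ring

end Vandermonde

theorem YDCovers.card_eq {μ ν : YoungDiagram} (h : YDCovers μ ν) : ν.card = μ.card + 1 := by
  obtain ⟨c, hc, hν⟩ := h
  rw [YoungDiagram.card, hν, Finset.card_insert_of_notMem hc]

theorem YDCovers.card_lt {μ ν : YoungDiagram} (h : YDCovers μ ν) : μ.card < ν.card :=
  h.card_eq ▸ Nat.lt_add_one _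

theorem dimYD_eq_natCard (ν : YoungDiagram) : dimYD ν = Nat.card (ChainFromTo YDCovers ⊥ ν) :=
  rfl

theorem dimYD_bot : dimYD ⊥ = 1 :=
  ChainFromTo.natCard_self fun _ _ => YDCovers.card_lt

namespace YoungDiagram

open Finset

/-- The cells of `μ` not weakly south-east of the last cell of row `r`: a Young diagram for every
`r`, and `μ` with that cell removed when it is a corner. -/
def shortenRow (μ : YoungDiagram) (r : ℕ) : YoungDiagram where
  cells := μ.cells.filter fun p => ¬ (r, μ.rowLen r - 1) ≤ p
  isLowerSet p q hqp hp := by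
    simp only [coe_filter, mem_cells, Set.mem_ofPred_eq] at hp ⊢
    exact ⟨μ.isLowerSet hqp hp.1, fun h => hp.2 (h.trans hqp)⟩

def cornerRows (μ : YoungDiagram) : Finset ℕ :=
  (range (μ.colLen 0)).filter fun r => μ.rowLen (r + 1) < μ.rowLen r

def shiftedRowLen (μ : YoungDiagram) (m i : ℕ) : ℕ := μ.rowLen i + (m - 1 - i)

def colShift (μ : YoungDiagram) (m j : ℕ) : ℕ := m + j - μ.colLen j

variable (F : Type*) [Field F] in
def cornerWeight (ν : YoungDiagram) (m r : ℕ) : F :=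
  (ν.shiftedRowLen m r : F) * ∏ j ∈ (range m).erase r,
    ((ν.shiftedRowLen m r : F) - 1 - ν.shiftedRowLen m j) /
      ((ν.shiftedRowLen m r : F) - ν.shiftedRowLen m j)

variable {μ ν : YoungDiagram} {m r : ℕ}

theorem mem_shortenRow {p : ℕ × ℕ} :
    p ∈ μ.shortenRow r ↔ p ∈ μ ∧ ¬ (r, μ.rowLen r - 1) ≤ p := by
  rw [← mem_cells]
  simp [shortenRow]

theorem rowLen_shortenRow (h : μ.rowLen (r + 1) < μ.rowLen r) :
    (μ.shortenRow r).rowLen = Function.update μ.rowLen r (μ.rowLen r - 1) := by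
  funext i
  refine eq_of_forall_lt_iff fun j => ?_
  rw [← mem_iff_lt_rowLen, mem_shortenRow, mem_iff_lt_rowLen, Prod.mk_le_mk]
  have := μ.rowLen_anti (r + 1) i
  rcases eq_or_ne i r with rfl | hi
  · simp only [Function.update_self]
    omega
  · simp only [Function.update_of_ne hi]
    omega

theorem yDCovers_iff :
    YDCovers μ ν ↔ ∃ r, ν.rowLen (r + 1) < ν.rowLen r ∧ ν.shortenRow r = μ := by
  constructor
  · rintro ⟨⟨r, s⟩, hc, hν⟩
    have mem_ν {p} : p ∈ ν ↔ p = (r, s) ∨ p ∈ μ := by rw [← mem_cells, hν, mem_insert, mem_cells]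
    have eq_of_le {p} (hp : p ∈ ν) (hle : (r, s) ≤ p) : p = (r, s) :=
      (mem_ν.mp hp).resolve_right fun hpμ => hc (μ.isLowerSet hle hpμ)
    have hrow : ν.rowLen r = s + 1 := by
      have h1 := mem_iff_lt_rowLen.mp (mem_ν.mpr (.inl rfl))
      have h2 : ¬ s + 1 < ν.rowLen r := fun h => by
        simpa using eq_of_le (mem_iff_lt_rowLen.mpr h) (by simp)
      omega
    refine ⟨r, ?_, ?_⟩
    · by_contra! h
      simpa using eq_of_le (mem_iff_lt_rowLen.mpr (by omega : s < ν.rowLen (r + 1))) (by simp)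
    · ext p
      rw [mem_cells, mem_cells, mem_shortenRow, hrow, Nat.add_sub_cancel]
      constructor
      · rintro ⟨hp, hle⟩
        exact (mem_ν.mp hp).resolve_left (by rintro rfl; exact hle le_rfl)
      · intro hp
        refine ⟨mem_ν.mpr (.inr hp), fun hle => hc ?_⟩
        rwa [← eq_of_le (mem_ν.mpr (.inr hp)) hle]
  · rintro ⟨r, h, rfl⟩
    refine ⟨(r, ν.rowLen r - 1), by simp [mem_shortenRow], ?_⟩
    ext ⟨i, j⟩
    rw [mem_insert, mem_cells, mem_cells, mem_shortenRow, mem_iff_lt_rowLen, Prod.mk.injEq,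
      Prod.mk_le_mk]
    have := ν.rowLen_anti r i
    have := ν.rowLen_anti (r + 1) i
    constructor
    · intro hj
      by_cases hi : i = r
      · subst hi; omega
      · right; omega
    · rintro (⟨rfl, rfl⟩ | ⟨hj, -⟩) <;> omega

theorem cornerRows_subset_range : μ.cornerRows ⊆ range (μ.colLen 0) := filter_subset _ _

theorem mem_cornerRows : r ∈ μ.cornerRows ↔ μ.rowLen (r + 1) < μ.rowLen r := by
  rw [cornerRows, mem_filter, mem_range, ← mem_iff_lt_colLen, mem_iff_lt_rowLen]
  omega

theorem shortenRow_injOn : Set.InjOn μ.shortenRow μ.cornerRows := by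
  intro r hr r' hr' h
  have h := congrFun (congrArg rowLen h) r
  rw [rowLen_shortenRow (mem_cornerRows.mp hr), rowLen_shortenRow (mem_cornerRows.mp hr')] at h
  by_contra hne
  rw [Function.update_self, Function.update_of_ne hne] at h
  have := mem_cornerRows.mp hr
  omega

theorem card_shortenRow (hr : r ∈ μ.cornerRows) : (μ.shortenRow r).card + 1 = μ.card :=
  ((yDCovers_iff.mpr ⟨r, mem_cornerRows.mp hr, rfl⟩).card_eq).symm

end YoungDiagram

open YoungDiagram in
theorem dimYD_eq_sum_shortenRow {ν : YoungDiagram} (hν : ν ≠ ⊥) :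
    dimYD ν = ∑ r ∈ ν.cornerRows, dimYD (ν.shortenRow r) := by
  classical
  have mem_lowerCovers {μ ν : YoungDiagram} :
      μ ∈ ν.cornerRows.image ν.shortenRow ↔ YDCovers μ ν := by
    simp only [Finset.mem_image, mem_cornerRows, yDCovers_iff]
  have hfin := ChainFromTo.finite (R := YDCovers) (a := ⊥) (fun _ _ => YDCovers.card_lt) fun ν =>
    (ν.cornerRows.image ν.shortenRow).finite_toSet.subset fun μ h => mem_lowerCovers.mpr h
  rw [← Finset.sum_image shortenRow_injOn, dimYD_eq_natCard]
  exact ChainFromTo.natCard_eq_sum (Ne.symm hν) _ (fun μ => mem_lowerCovers) fun μ _ => hfin μ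

namespace YoungDiagram

open Finset

variable {μ ν : YoungDiagram} {m r : ℕ}

theorem rowLen_colLen_zero (μ : YoungDiagram) : μ.rowLen (μ.colLen 0) = 0 := by
  by_contra h
  exact (mem_iff_lt_colLen.mp (mem_iff_lt_rowLen.mpr (Nat.pos_of_ne_zero h))).false

theorem lt_of_rowLen_pos (hm : μ.rowLen m = 0) (hr : 0 < μ.rowLen r) : r < m := by
  by_contra! h
  have := μ.rowLen_anti m r h
  omega

theorem colLen_le_of_rowLen_eq_zero (hm : μ.rowLen m = 0) (j : ℕ) : μ.colLen j ≤ m := by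
  by_contra! h
  have := mem_iff_lt_rowLen.mp (mem_iff_lt_colLen.mpr h)
  omega

@[to_additive]
theorem prod_cells_eq {M : Type*} [CommMonoid M] (hm : μ.rowLen m = 0) (f : ℕ × ℕ → M) :
    ∏ b ∈ μ.cells, f b = ∏ i ∈ range m, ∏ j ∈ range (μ.rowLen i), f (i, j) :=
  prod_finset_product _ _ _ fun ⟨i, j⟩ => by
    rw [mem_cells, mem_iff_lt_rowLen, mem_range, mem_range, iff_and_self]
    exact fun hj => lt_of_rowLen_pos (r := i) hm (by omega)

theorem shiftedRowLen_strictAntiOn : StrictAntiOn (μ.shiftedRowLen m) (Set.Iio m) := by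
  intro i _ k hk hik
  have := μ.rowLen_anti i k hik.le
  simp only [shiftedRowLen, Set.mem_Iio] at *
  omega

theorem colShift_strictMono (hm : μ.rowLen m = 0) : StrictMono (μ.colShift m) := by
  intro j j' h
  have := μ.colLen_anti j j' h.le
  have := colLen_le_of_rowLen_eq_zero hm j
  simp only [colShift]
  omega

theorem hookLen_add_colShift (hm : μ.rowLen m = 0) {i j : ℕ} (hij : (i, j) ∈ μ) :
    hookLen μ (i, j) + μ.colShift m j = μ.shiftedRowLen m i := by
  have := mem_iff_lt_rowLen.mp hij
  have := mem_iff_lt_colLen.mp hij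
  have := colLen_le_of_rowLen_eq_zero hm j
  simp only [hookLen, armLen, legLen, colShift, shiftedRowLen]
  omega

theorem disjoint_image_colShift_image_shiftedRowLen (hm : μ.rowLen m = 0) (i : ℕ) :
    Disjoint ((range (μ.rowLen i)).image (μ.colShift m))
      ((Ioo i m).image (μ.shiftedRowLen m)) := by
  simp only [disjoint_left, mem_image, mem_range, mem_Ioo, not_exists, not_and]
  rintro _ ⟨j, hj, rfl⟩ k ⟨hik, hkm⟩ hjk
  have := colLen_le_of_rowLen_eq_zero hm j
  have := μ.rowLen_anti i k hik.le
  have : j < μ.rowLen k ↔ k < μ.colLen j := mem_iff_lt_rowLen.symm.trans mem_iff_lt_colLen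
  simp only [colShift, shiftedRowLen] at hjk
  omega

theorem image_colShift_union_image_shiftedRowLen (hm : μ.rowLen m = 0) {i : ℕ} (hi : i < m) :
    (range (μ.rowLen i)).image (μ.colShift m) ∪ (Ioo i m).image (μ.shiftedRowLen m) =
      range (μ.shiftedRowLen m i) := by
  refine eq_of_subset_of_card_le ?_ ?_
  · simp only [union_subset_iff, image_subset_iff, mem_range]
    refine ⟨fun j hj => ?_, fun k hk =>
      shiftedRowLen_strictAntiOn hi (mem_Ioo.mp hk).2 (mem_Ioo.mp hk).1⟩
    have := hookLen_add_colShift hm (mem_iff_lt_rowLen.mpr hj)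
    have : 0 < hookLen μ (i, j) := Nat.succ_pos _
    omega
  · rw [card_union_of_disjoint (disjoint_image_colShift_image_shiftedRowLen hm i),
      card_image_of_injective _ (colShift_strictMono hm).injective,
      card_image_of_injOn (shiftedRowLen_strictAntiOn.injOn.mono fun k hk => (mem_Ioo.mp hk).2),
      card_range, card_range, Nat.card_Ioo, shiftedRowLen]
    omega

/-- The hook lengths of row `i` and the differences `ℓᵢ - ℓₖ` for `i < k < m` together
run through `1, …, ℓᵢ`. -/
theorem prod_hookLen_row_mul (hm : μ.rowLen m = 0) {i : ℕ} (hi : i < m) :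
    (∏ j ∈ range (μ.rowLen i), hookLen μ (i, j)) *
      ∏ k ∈ Ioo i m, (μ.shiftedRowLen m i - μ.shiftedRowLen m k) =
    (μ.shiftedRowLen m i).factorial := by
  have hhook : ∀ j ∈ range (μ.rowLen i),
      hookLen μ (i, j) = μ.shiftedRowLen m i - μ.colShift m j := fun j hj => by
    have := hookLen_add_colShift hm (mem_iff_lt_rowLen.mpr (mem_range.mp hj))
    omega
  rw [prod_congr rfl hhook,
    ← prod_image (f := (μ.shiftedRowLen m i - ·)) (colShift_strictMono hm).injective.injOn,
    ← prod_image (f := (μ.shiftedRowLen m i - ·))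
      (shiftedRowLen_strictAntiOn.injOn.mono fun k hk => (mem_Ioo.mp hk).2),
    ← prod_union (disjoint_image_colShift_image_shiftedRowLen hm i),
    image_colShift_union_image_shiftedRowLen hm hi, ← Nat.descFactorial_eq_prod_range,
    Nat.descFactorial_self]

theorem prod_hookLen_mul_vandermondeProd {R : Type*} [CommRing R] (hm : μ.rowLen m = 0) :
    (∏ b ∈ μ.cells, (hookLen μ b : R)) * vandermondeProd m (fun i => (μ.shiftedRowLen m i : R)) =
      ∏ i ∈ range m, ((μ.shiftedRowLen m i).factorial : R) := by
  rw [prod_cells_eq hm, vandermondeProd, ← prod_mul_distrib]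
  refine prod_congr rfl fun i hi => ?_
  rw [← prod_hookLen_row_mul hm (mem_range.mp hi)]
  push_cast
  congr 1
  refine prod_congr rfl fun k hk => ?_
  rw [Nat.cast_sub (shiftedRowLen_strictAntiOn (mem_range.mp hi) (mem_Ioo.mp hk).2
    (mem_Ioo.mp hk).1).le]

theorem sum_shiftedRowLen (hm : μ.rowLen m = 0) :
    ∑ i ∈ range m, μ.shiftedRowLen m i = μ.card + m.choose 2 := by
  rw [YoungDiagram.card, card_eq_sum_ones, sum_cells_eq hm]
  simp only [shiftedRowLen, sum_add_distrib, sum_const, card_range, smul_eq_mul, mul_one]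
  rw [sum_range_reflect (fun i => i) m, sum_range_id, Nat.choose_two_right]

theorem shiftedRowLen_shortenRow (hr : ν.rowLen (r + 1) < ν.rowLen r) :
    (ν.shortenRow r).shiftedRowLen m =
      Function.update (ν.shiftedRowLen m) r (ν.shiftedRowLen m r - 1) := by
  funext i
  rcases eq_or_ne i r with rfl | hi
  · simp only [shiftedRowLen, rowLen_shortenRow hr, Function.update_self]
    omega
  · simp only [shiftedRowLen, rowLen_shortenRow hr, Function.update_of_ne hi]

variable {F : Type*} [Field F] [CharZero F]

theorem injOn_shiftedRowLen_cast :
    Set.InjOn (fun i => (ν.shiftedRowLen m i : F)) (range m) := fun i hi k hk h =>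
  shiftedRowLen_strictAntiOn.injOn (by simpa using hi) (by simpa using hk) (Nat.cast_injective h)

theorem vandermondeProd_shiftedRowLen_ne_zero :
    vandermondeProd m (fun i => (ν.shiftedRowLen m i : F)) ≠ 0 :=
  prod_ne_zero_iff.mpr fun i hi => prod_ne_zero_iff.mpr fun k hk => sub_ne_zero.mpr fun h =>
    (mem_Ioo.mp hk).1.ne (injOn_shiftedRowLen_cast hi (by simp [(mem_Ioo.mp hk).2]) h)

theorem prod_hookLen_eq_mul_cornerWeight (hm : ν.rowLen m = 0)
    (hr : ν.rowLen (r + 1) < ν.rowLen r) :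
    ∏ b ∈ ν.cells, (hookLen ν b : F) =
      (∏ b ∈ (ν.shortenRow r).cells, (hookLen (ν.shortenRow r) b : F)) * cornerWeight F ν m r := by
  have hrm : r < m := lt_of_rowLen_pos hm (by omega)
  have hℓr : 0 < ν.shiftedRowLen m r := by simp only [shiftedRowLen]; omega
  have hμm : (ν.shortenRow r).rowLen m = 0 := by
    rw [rowLen_shortenRow hr, Function.update_of_ne hrm.ne']; exact hm
  have hfact : ∏ i ∈ range m, ((ν.shiftedRowLen m i).factorial : F) = ν.shiftedRowLen m r *
      ∏ i ∈ range m, (((ν.shortenRow r).shiftedRowLen m i).factorial : F) := by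
    rw [shiftedRowLen_shortenRow hr, ← mul_prod_erase _ _ (mem_range.mpr hrm),
      ← mul_prod_erase _ _ (mem_range.mpr hrm), Function.update_self, ← mul_assoc,
      ← Nat.cast_mul, Nat.mul_factorial_pred hℓr.ne']
    exact congrArg _ (prod_congr rfl fun i hi => by rw [Function.update_of_ne (ne_of_mem_erase hi)])
  have hw : (fun i => ((ν.shortenRow r).shiftedRowLen m i : F)) =
      Function.update (fun i => (ν.shiftedRowLen m i : F)) r (ν.shiftedRowLen m r - 1) := by
    funext i
    rw [shiftedRowLen_shortenRow hr, ← Nat.cast_pred hℓr]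
    exact Function.apply_update (fun _ => Nat.cast) _ _ _ i
  have hν := prod_hookLen_mul_vandermondeProd (R := F) hm
  have hμ := prod_hookLen_mul_vandermondeProd (R := F) hμm
  have hupd := vandermondeProd_update_mul hrm (fun i => (ν.shiftedRowLen m i : F))
    (ν.shiftedRowLen m r - 1)
  have hP : ∏ j ∈ (range m).erase r, ((ν.shiftedRowLen m r : F) - ν.shiftedRowLen m j) ≠ 0 :=
    prod_ne_zero_iff.mpr fun j hj => sub_ne_zero.mpr fun h => (ne_of_mem_erase hj)
      (injOn_shiftedRowLen_cast (mem_range.mpr hrm) (mem_of_mem_erase hj) h).symm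
  rw [hw] at hμ
  rw [cornerWeight, prod_div_distrib, ← mul_div_assoc, ← mul_div_assoc, eq_div_iff hP]
  apply mul_right_cancel₀ (vandermondeProd_shiftedRowLen_ne_zero (F := F) (ν := ν) (m := m))
  set P := ∏ j ∈ (range m).erase r, ((ν.shiftedRowLen m r : F) - ν.shiftedRowLen m j)
  set Hμ := ∏ b ∈ (ν.shortenRow r).cells, (hookLen (ν.shortenRow r) b : F)
  linear_combination P * hν + P * hfact - ν.shiftedRowLen m r * P * hμ +
    ν.shiftedRowLen m r * Hμ * hupd

theorem cornerWeight_eq_zero (hm : ν.rowLen m = 0) (hr : r < m)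
    (hc : ν.rowLen r ≤ ν.rowLen (r + 1)) : cornerWeight F ν m r = 0 := by
  have := ν.rowLen_anti r (r + 1) (by omega)
  rcases (show r + 1 ≤ m from hr).lt_or_eq with hr1 | rfl
  · refine mul_eq_zero_of_right _ (prod_eq_zero (i := r + 1) (by simp; omega) ?_)
    rw [div_eq_zero_iff, sub_sub, sub_eq_zero]
    left
    exact_mod_cast (by simp only [shiftedRowLen]; omega : ν.shiftedRowLen m r = 1 + _)
  · refine mul_eq_zero_of_left ?_ _
    simp only [shiftedRowLen, Nat.cast_eq_zero]
    omega

theorem sum_cornerWeight (hm : ν.rowLen m = 0) :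
    ∑ r ∈ range m, cornerWeight F ν m r = ν.card := by
  simp only [cornerWeight]
  rw [Lagrange.sum_mul_prod_sub_one_div_sub injOn_shiftedRowLen_cast, card_range,
    ← Nat.cast_sum, sum_shiftedRowLen hm]
  push_cast
  ring

theorem sum_cornerRows_cornerWeight :
    ∑ r ∈ ν.cornerRows, cornerWeight F ν (ν.colLen 0) r = ν.card := by
  rw [← sum_cornerWeight ν.rowLen_colLen_zero]
  exact sum_subset cornerRows_subset_range fun r hr hc => cornerWeight_eq_zero
    ν.rowLen_colLen_zero (mem_range.mp hr) (not_lt.mp (mt mem_cornerRows.mpr hc))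

end YoungDiagram

open YoungDiagram Finset in
theorem dimYD_mul_prod_hookLen (ν : YoungDiagram) :
    dimYD ν * ∏ b ∈ ν.cells, hookLen ν b = ν.card.factorial := by
  induction hn : ν.card generalizing ν with
  | zero =>
    obtain rfl : ν = ⊥ := YoungDiagram.ext (card_eq_zero.mp hn)
    simp [dimYD_bot]
  | succ n ih =>
    have hν : ν ≠ ⊥ := by rintro rfl; simp [YoungDiagram.card] at hn
    have hterm : ∀ r ∈ ν.cornerRows, (dimYD (ν.shortenRow r) : ℚ) *
        ∏ b ∈ ν.cells, (hookLen ν b : ℚ) = n.factorial * cornerWeight ℚ ν (ν.colLen 0) r :=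
      fun r hr => by
        have := card_shortenRow hr
        rw [prod_hookLen_eq_mul_cornerWeight ν.rowLen_colLen_zero (mem_cornerRows.mp hr),
          ← mul_assoc, ← ih (ν.shortenRow r) (by omega)]
        push_cast
        rfl
    apply Nat.cast_injective (R := ℚ)
    rw [dimYD_eq_sum_shortenRow hν]
    push_cast
    rw [sum_mul, sum_congr rfl hterm, ← mul_sum, sum_cornerRows_cornerWeight, hn,
      Nat.factorial_succ]
    push_cast
    ring

/-- The hook formula: `dim λ = n! ∏_{b∈λ} h(b)⁻¹` for every Young diagram `λ` with
`n = |λ|` boxes. -/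
theorem hook_formula (lam : YoungDiagram) (n : ℕ) (hn : n = lam.card) :
    (dimYD lam : ℝ) =
      (Nat.factorial n : ℝ) * ∏ b ∈ lam.cells, (hookLen lam b : ℝ)⁻¹ := by
  have hH : ∏ b ∈ lam.cells, (hookLen lam b : ℝ) ≠ 0 :=
    Finset.prod_ne_zero_iff.mpr fun b _ => Nat.cast_ne_zero.mpr (Nat.succ_ne_zero _)
  rw [hn, ← dimYD_mul_prod_hookLen, Finset.prod_inv_distrib, Nat.cast_mul, Nat.cast_prod,
    mul_inv_cancel_right₀ hH]
end

section
/- For every Young diagram λ with n = |λ| boxes, ∑_{Λ : λ ↗ Λ} dim Λ = (n + 1) · dim λ, where the sum runs over all Young diagrams Λ obtained from λ by adding one box. -/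
/-!
Removing the last step of a chain gives `dim Λ = ∑_{ν ↗ Λ} dim ν` for `Λ ≠ ∅`. Hence
`∑_{λ ↗ Λ} dim Λ` is `#{Λ : λ ↗ Λ} · dim λ` plus a sum of `dim ν` over the pairs `λ ↗ Λ`, `ν ↗ Λ`
with `ν ≠ λ`. In the lattice of Young diagrams these pairs correspond, via `Λ = λ ⊔ ν` and
`κ = λ ⊓ ν`, to the pairs `κ ↗ λ`, `κ ↗ ν` with `ν ≠ λ`, so by induction on `n = |λ|` the extra sum
is `∑_{κ ↗ λ} (n dim κ - dim λ) = n dim λ - #{κ : κ ↗ λ} · dim λ`. Since `λ` has exactly one more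
addable box than removable boxes, the total is `(n + 1) dim λ`.
-/

open Finset

namespace YoungDiagram

instance : DecidableEq YoungDiagram := fun μ ν =>
  decidable_of_iff (μ.cells = ν.cells) YoungDiagram.ext_iff.symm

variable {κ μ ν Λ : YoungDiagram}

lemma eq_of_le_of_card_le (h : μ ≤ ν) (hc : ν.card ≤ μ.card) : μ = ν :=
  YoungDiagram.ext (eq_of_subset_of_card_le (cells_subset_iff.2 h) hc)

lemma card_sup_add_card_inf (μ ν : YoungDiagram) :
    (μ ⊔ ν).card + (μ ⊓ ν).card = μ.card + ν.card := by
  simp only [YoungDiagram.card, cells_sup, cells_inf, card_union_add_card_inter]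

lemma card_inf_lt_of_ne (hne : μ ≠ ν) (hc : μ.card = ν.card) : (μ ⊓ ν).card < μ.card := by
  by_contra! h
  have hinf : μ ⊓ ν = μ := eq_of_le_of_card_le inf_le_left h
  exact hne (eq_of_le_of_card_le (hinf ▸ inf_le_right) hc.ge)

lemma yDCovers_iff_s7 : YDCovers μ ν ↔ μ ≤ ν ∧ ν.card = μ.card + 1 := by
  have hcov : YDCovers μ ν ↔ μ.cells ⋖ ν.cells := by
    simp only [YDCovers, covBy_iff_exists_insert, eq_comm]
  rw [hcov, covBy_iff_card_sdiff_eq_one, cells_subset_iff]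
  refine and_congr_right fun h => ?_
  have := card_sdiff_add_card_eq_card (cells_subset_iff.2 h)
  simp only [YoungDiagram.card]
  omega

lemma _root_.YDCovers.card_eq_s7 (h : YDCovers μ ν) : ν.card = μ.card + 1 :=
  (yDCovers_iff_s7.1 h).2

lemma _root_.YDCovers.ne_bot (h : YDCovers μ ν) : ν ≠ ⊥ := by
  rintro rfl
  simpa [YoungDiagram.card] using h.card_eq_s7

lemma diamond_below (hμ : YDCovers μ Λ) (hν : YDCovers ν Λ) (hne : ν ≠ μ) :
    YDCovers (μ ⊓ ν) μ ∧ YDCovers (μ ⊓ ν) ν ∧ μ ⊔ ν = Λ := by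
  simp only [yDCovers_iff_s7] at hμ hν ⊢
  have hinf := card_inf_lt_of_ne hne.symm (by omega)
  have hsum := card_sup_add_card_inf μ ν
  have hsup : μ ⊔ ν = Λ := eq_of_le_of_card_le (sup_le hμ.1 hν.1) (by omega)
  rw [hsup] at hsum
  exact ⟨⟨inf_le_left, by omega⟩, ⟨inf_le_right, by omega⟩, hsup⟩

lemma diamond_above (hμ : YDCovers κ μ) (hν : YDCovers κ ν) (hne : ν ≠ μ) :
    YDCovers μ (μ ⊔ ν) ∧ YDCovers ν (μ ⊔ ν) ∧ μ ⊓ ν = κ := by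
  simp only [yDCovers_iff_s7] at hμ hν ⊢
  have hinf := card_inf_lt_of_ne hne.symm (by omega)
  have hsum := card_sup_add_card_inf μ ν
  have hinf_eq : μ ⊓ ν = κ := (eq_of_le_of_card_le (le_inf hμ.1 hν.1) (by omega)).symm
  rw [hinf_eq] at hsum
  exact ⟨⟨le_sup_left, by omega⟩, ⟨le_sup_right, by omega⟩, hinf_eq⟩

def rect (i j : ℕ) : YoungDiagram where
  cells := range (i + 1) ×ˢ range (j + 1)
  isLowerSet := by
    rintro ⟨a, b⟩ ⟨x, y⟩ ⟨hax, hby⟩ h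
    simp only [coe_product, coe_range, Set.mem_prod, Set.mem_Iio] at h ⊢
    omega

@[simp] lemma mem_rect {i j : ℕ} {c : ℕ × ℕ} : c ∈ rect i j ↔ c.1 ≤ i ∧ c.2 ≤ j := by
  rw [← mem_cells]
  simp [rect]

def addToRow (μ : YoungDiagram) (i : ℕ) : YoungDiagram := μ ⊔ rect i (μ.rowLen i)

def removeFromRow (μ : YoungDiagram) (i : ℕ) : YoungDiagram where
  cells := μ.cells.filter fun c => ¬(i, μ.rowLen i - 1) ≤ c
  isLowerSet x y hxy h := by
    simp only [coe_filter, mem_cells] at h ⊢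
    exact ⟨μ.isLowerSet hxy h.1, fun hc => h.2 (hc.trans hxy)⟩

def removableRows (μ : YoungDiagram) : Finset ℕ :=
  (range (μ.colLen 0)).filter fun i => μ.rowLen (i + 1) < μ.rowLen i

/-- A box can be added to row `i + 1` exactly when one can be removed from row `i`. -/
def addableRows (μ : YoungDiagram) : Finset ℕ :=
  insert 0 (μ.removableRows.map (addRightEmbedding 1))

lemma mem_removableRows {i : ℕ} : i ∈ μ.removableRows ↔ μ.rowLen (i + 1) < μ.rowLen i := by
  have hcol : 0 < μ.rowLen i → i < μ.colLen 0 := fun h =>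
    mem_iff_lt_colLen.1 (mem_iff_lt_rowLen.2 h)
  simp only [removableRows, mem_filter, mem_range]
  exact ⟨And.right, fun hi => ⟨hcol (by omega), hi⟩⟩

lemma mem_addableRows {i : ℕ} : i ∈ μ.addableRows ↔ i = 0 ∨ μ.rowLen i < μ.rowLen (i - 1) := by
  rcases i with _ | i <;> simp [addableRows, mem_removableRows]

lemma card_addableRows : #μ.addableRows = #μ.removableRows + 1 := by
  rw [addableRows, card_insert_of_notMem (by simp), card_map]

lemma cells_addToRow {i : ℕ} (hi : i ∈ μ.addableRows) :
    (μ.addToRow i).cells = insert (i, μ.rowLen i) μ.cells := by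
  ext ⟨a, b⟩
  have hanti : a < i → μ.rowLen (i - 1) ≤ μ.rowLen a := fun h => μ.rowLen_anti a (i - 1) (by omega)
  rw [mem_addableRows] at hi
  simp only [addToRow, cells_sup, mem_union, mem_insert, mem_cells, mem_rect, Prod.mk.injEq]
  rw [mem_iff_lt_rowLen]
  rcases lt_trichotomy a i with h | rfl | h
  · have := hanti h
    omega
  · omega
  · omega

lemma cells_removeFromRow {i : ℕ} (hi : i ∈ μ.removableRows) :
    (μ.removeFromRow i).cells = μ.cells.erase (i, μ.rowLen i - 1) := by
  ext ⟨a, b⟩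
  have hanti : i < a → μ.rowLen a ≤ μ.rowLen (i + 1) := fun h => μ.rowLen_anti (i + 1) a h
  rw [mem_removableRows] at hi
  simp only [removeFromRow, mem_filter, mem_erase, mem_cells, Prod.mk_le_mk, ne_eq,
    Prod.mk.injEq, mem_iff_lt_rowLen]
  rcases lt_trichotomy a i with h | rfl | h
  · omega
  · omega
  · have := hanti h
    omega

lemma mem_of_le_of_cells_eq_insert {c x : ℕ × ℕ} (h : Λ.cells = insert c μ.cells) (hx : x ≤ c)
    (hne : x ≠ c) : x ∈ μ := by
  have hxΛ : x ∈ Λ.cells := Λ.isLowerSet hx (by simp [h])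
  rw [h, mem_insert] at hxΛ
  exact (mem_cells _).1 (hxΛ.resolve_left hne)

lemma notMem_of_le_of_cells_eq_insert {c x : ℕ × ℕ} (hc : c ∉ ν.cells)
    (h : μ.cells = insert c ν.cells) (hx : c ≤ x) (hne : x ≠ c) : x ∉ μ := by
  intro hxμ
  rw [← mem_cells, h, mem_insert] at hxμ
  exact hc (ν.isLowerSet hx (hxμ.resolve_left hne))

lemma _root_.YDCovers.exists_addableRows (h : YDCovers μ Λ) :
    ∃ i ∈ μ.addableRows, Λ.cells = insert (i, μ.rowLen i) μ.cells := by
  obtain ⟨⟨i, j⟩, hc, hΛ⟩ := h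
  rw [mem_cells, mem_iff_lt_rowLen, not_lt] at hc
  have hj : j = μ.rowLen i := by
    by_contra hne
    have := mem_of_le_of_cells_eq_insert hΛ (x := (i, μ.rowLen i)) ⟨le_rfl, hc⟩ (by simp; omega)
    simp [mem_iff_lt_rowLen] at this
  subst hj
  refine ⟨i, mem_addableRows.2 ?_, hΛ⟩
  rcases i with _ | i
  · exact Or.inl rfl
  · have := mem_of_le_of_cells_eq_insert hΛ (x := (i, μ.rowLen (i + 1))) ⟨by simp, le_rfl⟩
      (by simp)
    exact Or.inr (mem_iff_lt_rowLen.1 this)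

lemma _root_.YDCovers.exists_removableRows (h : YDCovers ν μ) :
    ∃ i ∈ μ.removableRows, ν.cells = μ.cells.erase (i, μ.rowLen i - 1) := by
  obtain ⟨⟨i, j⟩, hc, hμ⟩ := h
  have hmem : (i, j) ∈ μ := by simp [← mem_cells, hμ]
  have hright := notMem_of_le_of_cells_eq_insert hc hμ (x := (i, j + 1)) (by simp) (by simp)
  have hbelow := notMem_of_le_of_cells_eq_insert hc hμ (x := (i + 1, j)) (by simp) (by simp)
  rw [mem_iff_lt_rowLen] at hmem hright hbelow
  obtain rfl : j = μ.rowLen i - 1 := by omega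
  exact ⟨i, mem_removableRows.2 (by omega), by rw [hμ, erase_insert hc]⟩

def upperCovers (μ : YoungDiagram) : Finset YoungDiagram :=
  μ.addableRows.image μ.addToRow

def lowerCovers (μ : YoungDiagram) : Finset YoungDiagram :=
  μ.removableRows.image μ.removeFromRow

lemma mem_upperCovers : Λ ∈ μ.upperCovers ↔ YDCovers μ Λ := by
  constructor
  · intro h
    obtain ⟨i, hi, rfl⟩ := mem_image.1 h
    exact ⟨(i, μ.rowLen i), by simp [mem_iff_lt_rowLen], cells_addToRow hi⟩
  · intro h
    obtain ⟨i, hi, hΛ⟩ := h.exists_addableRows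
    exact mem_image.2 ⟨i, hi, YoungDiagram.ext (by rw [cells_addToRow hi, hΛ])⟩

lemma mem_lowerCovers : ν ∈ μ.lowerCovers ↔ YDCovers ν μ := by
  constructor
  · intro h
    obtain ⟨i, hi, rfl⟩ := mem_image.1 h
    have hmem : (i, μ.rowLen i - 1) ∈ μ.cells := by
      rw [mem_cells, mem_iff_lt_rowLen]
      have := mem_removableRows.1 hi
      omega
    exact ⟨(i, μ.rowLen i - 1), by simp [cells_removeFromRow hi],
      by rw [cells_removeFromRow hi, insert_erase hmem]⟩
  · intro h
    obtain ⟨i, hi, hν⟩ := h.exists_removableRows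
    exact mem_image.2 ⟨i, hi, YoungDiagram.ext (by rw [cells_removeFromRow hi, hν])⟩

lemma card_upperCovers : #μ.upperCovers = #μ.lowerCovers + 1 := by
  rw [upperCovers, lowerCovers, card_image_of_injOn, card_image_of_injOn, card_addableRows]
  · intro i hi j hj hij
    have hcells := congrArg cells hij
    rw [cells_removeFromRow hi, cells_removeFromRow hj, erase_inj] at hcells
    · exact (Prod.ext_iff.1 hcells).1
    · rw [mem_cells, mem_iff_lt_rowLen]
      have := mem_removableRows.1 hi
      omega
  · intro i hi j hj hij
    have hcells := congrArg cells hij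
    rw [cells_addToRow hi, cells_addToRow hj, insert_inj (by simp [mem_iff_lt_rowLen])] at hcells
    exact (Prod.ext_iff.1 hcells).1

lemma sum_upperCovers_sum_lowerCovers_erase {M : Type*} [AddCommMonoid M] (f : YoungDiagram → M)
    (μ : YoungDiagram) :
    ∑ Λ ∈ μ.upperCovers, ∑ ν ∈ Λ.lowerCovers.erase μ, f ν =
      ∑ κ ∈ μ.lowerCovers, ∑ ν ∈ κ.upperCovers.erase μ, f ν := by
  rw [sum_sigma', sum_sigma']
  refine sum_nbij' (fun p => ⟨μ ⊓ p.2, p.2⟩) (fun p => ⟨μ ⊔ p.2, p.2⟩) ?_ ?_ ?_ ?_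
    fun _ _ => rfl
  all_goals
    rintro ⟨_, ν⟩ hp
    simp only [mem_sigma, mem_erase, mem_upperCovers, mem_lowerCovers] at hp ⊢
  · obtain ⟨h₁, h₂, -⟩ := diamond_below hp.1 hp.2.2 hp.2.1
    exact ⟨h₁, hp.2.1, h₂⟩
  · obtain ⟨h₁, h₂, -⟩ := diamond_above hp.1 hp.2.2 hp.2.1
    exact ⟨h₁, hp.2.1, h₂⟩
  · rw [(diamond_below hp.1 hp.2.2 hp.2.1).2.2]
  · rw [(diamond_above hp.1 hp.2.2 hp.2.1).2.2]

def ChainsTo (μ : YoungDiagram) : Type :=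
  {L : List YoungDiagram // L.IsChain YDCovers ∧ L.head? = some ⊥ ∧ L.getLast? = some μ}

lemma dimYD_eq_card (μ : YoungDiagram) : dimYD μ = Nat.card (ChainsTo μ) := rfl

def ChainsTo.snoc (h : YDCovers ν μ) (L : ChainsTo ν) : ChainsTo μ :=
  ⟨L.1 ++ [μ], by
    obtain ⟨L, hchain, hhead, hlast⟩ := L
    have hne : L ≠ [] := by rintro rfl; simp at hhead
    refine ⟨List.isChain_append.2 ⟨hchain, List.isChain_singleton μ, ?_⟩,
      by rwa [List.head?_append_of_ne_nil _ hne], List.getLast?_concat⟩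
    simpa [hlast] using h⟩

def snocSigma (μ : YoungDiagram) (x : Σ ν : μ.lowerCovers, ChainsTo ν) : ChainsTo μ :=
  x.2.snoc (mem_lowerCovers.1 x.1.2)

lemma snocSigma_injective (μ : YoungDiagram) : Function.Injective (snocSigma μ) := by
  rintro ⟨⟨ν, hν⟩, ⟨L, hL⟩⟩ ⟨⟨ν', hν'⟩, ⟨L', hL'⟩⟩ h
  obtain rfl : L = L' := List.append_cancel_right (congrArg Subtype.val h)
  obtain rfl : ν = ν' := Option.some_injective _ (hL.2.2.symm.trans hL'.2.2)
  rfl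

lemma exists_snocSigma_eq (L : ChainsTo μ) (hL : L.1 ≠ [μ]) : ∃ x, snocSigma μ x = L := by
  obtain ⟨L, hchain, hhead, hlast⟩ := L
  have hdecomp : L.dropLast ++ [μ] = L := List.dropLast_append_getLast? μ hlast
  have hne : L.dropLast ≠ [] := by
    rintro hnil
    rw [hnil, List.nil_append] at hdecomp
    exact hL hdecomp.symm
  obtain ⟨ν, hν⟩ := Option.ne_none_iff_exists'.1 (mt List.getLast?_eq_none_iff.1 hne)
  rw [← hdecomp] at hchain hhead
  obtain ⟨hchain', -, hcov⟩ := List.isChain_append.1 hchain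
  have hcov : YDCovers ν μ := hcov ν hν μ rfl
  rw [List.head?_append_of_ne_nil _ hne] at hhead
  exact ⟨⟨⟨ν, mem_lowerCovers.2 hcov⟩, ⟨_, hchain', hhead, hν⟩⟩, Subtype.ext hdecomp⟩

lemma snocSigma_surjective (hμ : μ ≠ ⊥) : Function.Surjective (snocSigma μ) := by
  refine fun L => exists_snocSigma_eq L fun h => hμ ?_
  have := L.2.2.1
  rw [h] at this
  exact Option.some_injective _ this

instance : Subsingleton (ChainsTo ⊥) := by
  refine ⟨fun L L' => Subtype.ext ?_⟩
  suffices h : ∀ L : ChainsTo ⊥, L.1 = [⊥] by rw [h L, h L']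
  intro L
  by_contra hL
  obtain ⟨⟨⟨ν, hν⟩, _⟩, _⟩ := exists_snocSigma_eq L hL
  exact (mem_lowerCovers.1 hν).ne_bot rfl

instance finite_chainsTo (μ : YoungDiagram) : Finite (ChainsTo μ) := by
  induction h : μ.card using Nat.strong_induction_on generalizing μ with
  | _ n ih =>
    rcases eq_or_ne μ ⊥ with rfl | hμ
    · infer_instance
    · have : ∀ ν : μ.lowerCovers, Finite (ChainsTo ν) := fun ν =>
        ih _ (by have := (mem_lowerCovers.1 ν.2).card_eq_s7; omega) ν rfl
      exact Finite.of_surjective _ (snocSigma_surjective hμ)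

lemma dimYD_eq_sum_lowerCovers (hμ : μ ≠ ⊥) : dimYD μ = ∑ ν ∈ μ.lowerCovers, dimYD ν := by
  rw [dimYD_eq_card, ← Nat.card_eq_of_bijective _ ⟨snocSigma_injective μ, snocSigma_surjective hμ⟩,
    Nat.card_sigma, ← sum_coe_sort μ.lowerCovers]
  rfl

theorem sum_dimYD_upperCovers (μ : YoungDiagram) :
    ∑ Λ ∈ μ.upperCovers, dimYD Λ = (μ.card + 1) * dimYD μ := by
  induction h : μ.card using Nat.strong_induction_on generalizing μ with
  | _ n ih =>
    have hup : ∀ Λ ∈ μ.upperCovers,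
        dimYD Λ = dimYD μ + ∑ ν ∈ Λ.lowerCovers.erase μ, dimYD ν := by
      intro Λ hΛ
      have hcov := mem_upperCovers.1 hΛ
      rw [dimYD_eq_sum_lowerCovers hcov.ne_bot, add_sum_erase _ _ (mem_lowerCovers.2 hcov)]
    have hdown : ∀ κ ∈ μ.lowerCovers,
        dimYD μ + ∑ ν ∈ κ.upperCovers.erase μ, dimYD ν = n * dimYD κ := by
      intro κ hκ
      have hcov := mem_lowerCovers.1 hκ
      have hcard := hcov.card_eq_s7
      rw [add_sum_erase _ _ (mem_upperCovers.2 hcov), ih κ.card (by omega) κ rfl]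
      congr 1
      omega
    have hrec : n * ∑ κ ∈ μ.lowerCovers, dimYD κ = n * dimYD μ := by
      rcases eq_or_ne μ ⊥ with rfl | hμ
      · simp [← h, YoungDiagram.card]
      · rw [← dimYD_eq_sum_lowerCovers hμ]
    calc ∑ Λ ∈ μ.upperCovers, dimYD Λ
        = #μ.upperCovers * dimYD μ +
            ∑ Λ ∈ μ.upperCovers, ∑ ν ∈ Λ.lowerCovers.erase μ, dimYD ν := by
          rw [sum_congr rfl hup, sum_add_distrib, sum_const, smul_eq_mul]
      _ = dimYD μ + ∑ κ ∈ μ.lowerCovers, (dimYD μ + ∑ ν ∈ κ.upperCovers.erase μ, dimYD ν) := by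
          rw [card_upperCovers, sum_upperCovers_sum_lowerCovers_erase, sum_add_distrib, sum_const,
            smul_eq_mul]
          ring
      _ = (n + 1) * dimYD μ := by
          rw [sum_congr rfl hdown, ← mul_sum, hrec]
          ring

end YoungDiagram

/-- For every Young diagram `λ` with `n = |λ|` boxes:
`∑_{Λ : λ ↗ Λ} dim Λ = (n + 1) dim λ`. -/
theorem sum_dim_covers (lam : YoungDiagram) (n : ℕ) (hn : n = lam.card) :
    ∑ᶠ Λ ∈ {Λ : YoungDiagram | YDCovers lam Λ}, dimYD Λ = (n + 1) * dimYD lam := by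
  have hcovers : {Λ | YDCovers lam Λ} = (lam.upperCovers : Set YoungDiagram) := by
    ext Λ
    simp [YoungDiagram.mem_upperCovers]
  rw [hcovers, finsum_mem_coe_finset, hn, YoungDiagram.sum_dimYD_upperCovers]
end

section
/- Let Λ be a Young diagram with n = |Λ| boxes, let x_1 < y_1 < x_2 < ⋯ < y_{d-1} < x_d be its interlacing corner-content sequences, and let λ be the Young diagram obtained from Λ by removing the removable box of content y_k. Then ∏_{b∈Λ} h_Λ(b) / ∏_{b∈λ} h_λ(b) = (x_d − y_k)(y_k − x_1) · ∏_{i=1}^{k-1} (y_k − x_{i+1})/(y_k − y_i) · ∏_{j=k+1}^{d-1} (y_k − x_j)/(y_k − y_j), where h_λ(b) and h_Λ(b) denote hook lengths taken in λ and Λ respectively. Equivalently, with f_λ = n!∏_{b∈λ} h_λ(b)^{-1}, one has f_λ/f_Λ = (x_d−y_k)(y_k−x_1)/n · ∏_{i=1}^{k-1}(y_k−x_{i+1})/(y_k−y_i) · ∏_{j=k+1}^{d-1}(y_k−x_j)/(y_k−y_j). -/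
/-- The hook expression `f_λ = |λ|! ∏_{b∈λ} h_λ(b)⁻¹`. -/
noncomputable def hookDim (μ : YoungDiagram) : ℝ :=
  (Nat.factorial μ.card : ℝ) * ∏ b ∈ μ.cells, (hookLen μ b : ℝ)⁻¹

/-- A box `c ∉ μ` is addable if adjoining it to `μ` gives a Young diagram. -/
def Addable (μ : YoungDiagram) (c : ℕ × ℕ) : Prop :=
  c ∉ μ.cells ∧ ∃ ν : YoungDiagram, ν.cells = insert c μ.cells

/-- A box `c ∈ μ` is removable if deleting it from `μ` leaves a Young diagram. -/
def Removable (μ : YoungDiagram) (c : ℕ × ℕ) : Prop :=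
  c ∈ μ.cells ∧ ∃ ν : YoungDiagram, ν.cells = μ.cells.erase c

/-- The content `c(b) = j − i` of a box `b = (i,j)`, as a real number (0-indexed). -/
noncomputable def contentBox (b : ℕ × ℕ) : ℝ := (b.2 : ℝ) - (b.1 : ℝ)


/-!
Deleting the corner `(r, c)` changes only the hooks of the cells left of it in row `r` and above
it in column `c`, each by one, so the hook ratio is `∏ h / (h - 1)` over these cells.
In row `r` the hook of `(r, j)` is the content of the corner minus the content of the cell just
below column `j`. Moving from column `j` to `j + 1` it drops by exactly one, except where the
column length drops, i.e. at the removable and addable cells; so the product telescopes to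
`∏ (y_k - x_i) / ∏ (y_k - y_i)` over the addable and removable contents below `y_k`.
Column `c` is row `c` of the transposed diagram, whose corner contents are negated; it supplies
the corner contents above `y_k`.
-/

open Finset

lemma prod_range_div_sub_one_mul {K : Type*} [Field K] (g : ℕ → K) (c : ℕ) :
    (∏ j ∈ range c, g j / (g j - 1)) * g c =
      g 0 * ∏ j ∈ range c, g (j + 1) / (g j - 1) := by
  induction c with
  | zero => simp
  | succ c ih =>
    rw [prod_range_succ, prod_range_succ, ← mul_assoc, ← ih]
    ring

lemma prod_image_neg_filter_lt {K : Type*} [CommRing K] [LinearOrder K] [IsOrderedAddMonoid K]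
    (A : Finset K) (t : K) :
    ∏ u ∈ A.image Neg.neg with u < -t, (-t - u) = ∏ u ∈ A with t < u, (u - t) := by
  rw [filter_image, prod_image neg_injective.injOn]
  simp only [neg_lt_neg_iff, sub_neg_eq_add, neg_add_eq_sub]

lemma prod_filter_image_of_injOn {α β M : Type*} [DecidableEq β] [CommMonoid M]
    {s : Finset α} {f : α → β} (hf : Set.InjOn f s) (p : β → Prop) [DecidablePred p]
    (F : β → M) : ∏ u ∈ s.image f with p u, F u = ∏ i ∈ s with p (f i), F (f i) := by
  rw [filter_image, prod_image (hf.mono (filter_subset _ s))]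

lemma filter_Icc_eq_Icc {p : ℕ → Prop} [DecidablePred p] {a b a' b' : ℕ} (ha : a ≤ a')
    (hb : b' ≤ b) (h : ∀ i, a ≤ i → i ≤ b → (p i ↔ a' ≤ i ∧ i ≤ b')) :
    {i ∈ Icc a b | p i} = Icc a' b' := by
  ext i
  simp only [mem_filter, mem_Icc]
  constructor
  · rintro ⟨hi, hp⟩
    exact (h i hi.1 hi.2).1 hp
  · intro hi
    exact ⟨⟨by omega, by omega⟩, (h i (by omega) (by omega)).2 hi⟩

section

variable {μ ν : YoungDiagram} {i j r c : ℕ}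

lemma contentBox_swap (b : ℕ × ℕ) : contentBox b.swap = -contentBox b := by
  simp [contentBox]

lemma hookLen_pos (μ : YoungDiagram) (b : ℕ × ℕ) : 0 < hookLen μ b := Nat.succ_pos _

lemma rowLen_eq_iff :
    μ.rowLen i = j ↔ μ.colLen j ≤ i ∧ (j = 0 ∨ i < μ.colLen (j - 1)) := by
  have h₁ := μ.mem_iff_lt_rowLen (i := i) (j := j)
  have h₂ := μ.mem_iff_lt_rowLen (i := i) (j := j - 1)
  rw [YoungDiagram.mem_iff_lt_colLen] at h₁ h₂
  omega

lemma removable_iff : Removable μ (i, j) ↔ μ.colLen j = i + 1 ∧ μ.rowLen i = j + 1 := by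
  simp only [rowLen_eq_iff, Nat.add_sub_cancel, Nat.add_one_ne_zero, false_or]
  constructor
  · rintro ⟨hmem, ν, hν⟩
    have hout : ∀ p, (i, j) ≤ p → p ≠ (i, j) → p ∉ μ := fun p hp hne hpμ => by
      have : (i, j) ∈ ν.cells := ν.isLowerSet hp (by simpa [hν, hne] using hpμ)
      simp [hν] at this
    have h₁ := hout (i + 1, j) (by simp) (by simp)
    have h₂ := hout (i, j + 1) (by simp) (by simp)
    rw [YoungDiagram.mem_cells, YoungDiagram.mem_iff_lt_colLen] at hmem
    rw [YoungDiagram.mem_iff_lt_colLen] at h₁ h₂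
    omega
  · rintro ⟨hcol, hnext, -⟩
    refine ⟨by simp [YoungDiagram.mem_iff_lt_colLen, hcol],
      ⟨μ.cells.erase (i, j), ?_⟩, rfl⟩
    intro p q hqp hp
    simp only [coe_erase, Set.mem_sdiff, mem_coe, YoungDiagram.mem_cells,
      Set.mem_singleton_iff] at hp ⊢
    obtain ⟨hpμ, hp⟩ := hp
    refine ⟨μ.isLowerSet hqp hpμ, ?_⟩
    rintro rfl
    obtain ⟨hi, hj⟩ := Prod.mk_le_mk.1 hqp
    have hlt : i < p.1 ∨ j < p.2 := by
      by_contra! h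
      exact hp (Prod.ext (le_antisymm h.1 hi) (le_antisymm h.2 hj))
    rcases hlt with h | h
    · have := μ.up_left_mem (i1 := i + 1) h hj hpμ
      rw [YoungDiagram.mem_iff_lt_colLen] at this
      omega
    · have := μ.up_left_mem (j1 := j + 1) hi h hpμ
      rw [YoungDiagram.mem_iff_lt_colLen] at this
      omega

lemma addable_iff : Addable μ (i, j) ↔ μ.colLen j = i ∧ μ.rowLen i = j := by
  constructor
  · rintro ⟨hnot, ν, hν⟩
    have hin : ∀ p, p ≤ (i, j) → p ≠ (i, j) → p ∈ μ := fun p hp hne => by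
      have : p ∈ ν.cells := ν.isLowerSet hp (by simp [hν])
      simpa [hν, hne] using this
    have h₁ : i = 0 ∨ (i - 1, j) ∈ μ := by
      rcases Nat.eq_zero_or_pos i with h | h
      · exact .inl h
      · exact .inr (hin _ (Prod.mk_le_mk.2 ⟨Nat.sub_le i 1, le_rfl⟩) (by simp; omega))
    have h₂ : j = 0 ∨ (i, j - 1) ∈ μ := by
      rcases Nat.eq_zero_or_pos j with h | h
      · exact .inl h
      · exact .inr (hin _ (Prod.mk_le_mk.2 ⟨le_rfl, Nat.sub_le j 1⟩) (by simp; omega))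
    rw [YoungDiagram.mem_cells, YoungDiagram.mem_iff_lt_colLen] at hnot
    simp only [YoungDiagram.mem_iff_lt_colLen] at h₁ h₂
    rw [rowLen_eq_iff]
    omega
  · rintro ⟨hcol, hrow⟩
    refine ⟨by simp [YoungDiagram.mem_iff_lt_colLen, hcol],
      ⟨insert (i, j) μ.cells, ?_⟩, rfl⟩
    intro p q hqp hp
    simp only [coe_insert, Set.mem_insert_iff, mem_coe, YoungDiagram.mem_cells] at hp ⊢
    rcases hp with rfl | hpμ
    · obtain ⟨hi, hj⟩ := Prod.mk_le_mk.1 hqp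
      by_cases hq : q = (i, j)
      · exact .inl hq
      have hlt : q.1 < i ∨ q.2 < j := by
        by_contra! h
        exact hq (Prod.ext (le_antisymm hi h.1) (le_antisymm hj h.2))
      refine .inr ?_
      rcases hlt with h | h
      · exact μ.up_left_mem le_rfl hj (YoungDiagram.mem_iff_lt_colLen.2 (hcol ▸ h))
      · exact μ.up_left_mem hi le_rfl (YoungDiagram.mem_iff_lt_rowLen.2 (hrow ▸ h))
    · exact .inr (μ.isLowerSet hqp hpμ)

lemma addable_iff_colLen :
    Addable μ (i, j) ↔ μ.colLen j = i ∧ (j = 0 ∨ μ.colLen j < μ.colLen (j - 1)) := by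
  rw [addable_iff, rowLen_eq_iff]
  omega

lemma removable_iff_colLen :
    Removable μ (i, j) ↔ μ.colLen j = i + 1 ∧ μ.colLen (j + 1) < μ.colLen j := by
  rw [removable_iff, rowLen_eq_iff]
  simp only [Nat.add_one_ne_zero, false_or, Nat.add_sub_cancel]
  omega

lemma addable_transpose_iff : Addable μ.transpose (i, j) ↔ Addable μ (j, i) := by
  rw [addable_iff, addable_iff, YoungDiagram.rowLen_transpose, YoungDiagram.colLen_transpose,
    and_comm]

lemma removable_transpose_iff : Removable μ.transpose (i, j) ↔ Removable μ (j, i) := by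
  rw [removable_iff, removable_iff, YoungDiagram.rowLen_transpose,
    YoungDiagram.colLen_transpose, and_comm]

lemma hookLen_transpose : hookLen μ.transpose (j, i) = hookLen μ (i, j) := by
  simp only [hookLen, armLen, legLen, YoungDiagram.rowLen_transpose,
    YoungDiagram.colLen_transpose]
  omega

lemma strictMono_contentBox_colLen (μ : YoungDiagram) :
    StrictMono fun j => contentBox (μ.colLen j, j) :=
  strictMono_nat_of_lt_succ fun j => by
    have : (μ.colLen (j + 1) : ℝ) ≤ μ.colLen j := by
      exact_mod_cast μ.colLen_anti _ _ j.le_succ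
    simp only [contentBox]
    push_cast
    linarith

lemma contentBox_of_removable (hb : Removable μ (i, j)) :
    contentBox (i, j) = contentBox (μ.colLen j, j) + 1 := by
  simp only [contentBox, (removable_iff_colLen.1 hb).1]
  push_cast
  ring

lemma contentBox_colLen_lt_iff (hb : Removable μ (r, c)) :
    contentBox (μ.colLen j, j) < contentBox (r, c) ↔ j ≤ c := by
  obtain ⟨hcol, hnext⟩ := removable_iff_colLen.1 hb
  constructor
  · intro h
    by_contra! hcj
    have hmono := (strictMono_contentBox_colLen μ).monotone hcj
    have : (μ.colLen (c + 1) : ℝ) ≤ r := by exact_mod_cast Nat.le_of_lt_succ (hcol ▸ hnext)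
    simp only [contentBox] at h hmono ⊢
    push_cast at hmono
    linarith
  · intro h
    have hmono := (strictMono_contentBox_colLen μ).monotone h
    simp only [contentBox, hcol] at hmono ⊢
    push_cast at hmono
    linarith

lemma contentBox_colLen_add_one_lt_iff (hb : Removable μ (r, c)) :
    contentBox (μ.colLen j, j) + 1 < contentBox (r, c) ↔ j < c := by
  rw [contentBox_of_removable hb, add_lt_add_iff_right,
    (strictMono_contentBox_colLen μ).lt_iff_lt]

lemma hookLen_row_of_removable (hb : Removable μ (r, c)) (hj : j ≤ c) :
    (hookLen μ (r, j) : ℝ) = contentBox (r, c) - contentBox (μ.colLen j, j) := by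
  obtain ⟨hcol, hrow⟩ := removable_iff.1 hb
  have hcolj : r + 1 ≤ μ.colLen j := hcol ▸ μ.colLen_anti j c hj
  have h : hookLen μ (r, j) + r + j = c + μ.colLen j := by
    simp only [hookLen, armLen, legLen, hrow]
    omega
  have h' : (hookLen μ (r, j) : ℝ) + r + j = c + μ.colLen j := by exact_mod_cast h
  simp only [contentBox]
  linarith

def cornerCols (μ : YoungDiagram) (c : ℕ) : Finset ℕ :=
  {j ∈ range c | μ.colLen (j + 1) < μ.colLen j}

lemma filter_addable_contents_lt (hb : Removable μ (r, c)) {A : Finset ℝ}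
    (hA : (A : Set ℝ) = contentBox '' {a | Addable μ a}) :
    {u ∈ A | u < contentBox (r, c)} = insert (contentBox (μ.colLen 0, 0))
      ((cornerCols μ c).image fun j => contentBox (μ.colLen (j + 1), j + 1)) := by
  have hAu : ∀ u, u ∈ A ↔ ∃ a, Addable μ a ∧ contentBox a = u := fun u => by
    rw [← mem_coe, hA]
    rfl
  ext u
  simp only [mem_filter, mem_insert, mem_image, cornerCols, mem_range]
  constructor
  · rintro ⟨hu, hlt⟩
    obtain ⟨⟨i, j⟩, ha, rfl⟩ := (hAu u).1 hu
    obtain ⟨rfl, hj⟩ := addable_iff_colLen.1 ha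
    have hjc := (contentBox_colLen_lt_iff hb).1 hlt
    cases j with
    | zero => exact .inl rfl
    | succ j => exact .inr ⟨j, ⟨by omega, by simpa using hj⟩, rfl⟩
  · rintro (rfl | ⟨j, ⟨hjc, hdrop⟩, rfl⟩)
    · exact ⟨(hAu _).2 ⟨_, addable_iff_colLen.2 ⟨rfl, .inl rfl⟩, rfl⟩,
        (contentBox_colLen_lt_iff hb).2 (Nat.zero_le c)⟩
    · exact ⟨(hAu _).2 ⟨_, addable_iff_colLen.2 ⟨rfl, .inr (by simpa using hdrop)⟩, rfl⟩,
        (contentBox_colLen_lt_iff hb).2 hjc⟩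

lemma filter_removable_contents_lt (hb : Removable μ (r, c)) {R : Finset ℝ}
    (hR : (R : Set ℝ) = contentBox '' {b | Removable μ b}) :
    {u ∈ R | u < contentBox (r, c)} =
      (cornerCols μ c).image fun j => contentBox (μ.colLen j, j) + 1 := by
  have hRu : ∀ u, u ∈ R ↔ ∃ b, Removable μ b ∧ contentBox b = u := fun u => by
    rw [← mem_coe, hR]
    rfl
  ext u
  simp only [mem_filter, mem_image, cornerCols, mem_range]
  constructor
  · rintro ⟨hu, hlt⟩
    obtain ⟨⟨i, j⟩, hij, rfl⟩ := (hRu u).1 hu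
    rw [contentBox_of_removable hij] at hlt ⊢
    exact ⟨j, ⟨(contentBox_colLen_add_one_lt_iff hb).1 hlt, (removable_iff_colLen.1 hij).2⟩,
      rfl⟩
  · rintro ⟨j, ⟨hjc, hdrop⟩, rfl⟩
    have hij : Removable μ (μ.colLen j - 1, j) := removable_iff_colLen.2 ⟨by omega, hdrop⟩
    exact ⟨(hRu _).2 ⟨_, hij, contentBox_of_removable hij⟩,
      (contentBox_colLen_add_one_lt_iff hb).2 hjc⟩

theorem prod_hookLen_row_div (hb : Removable μ (r, c)) {A R : Finset ℝ}
    (hA : (A : Set ℝ) = contentBox '' {a | Addable μ a})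
    (hR : (R : Set ℝ) = contentBox '' {b | Removable μ b}) :
    ∏ j ∈ range c, (hookLen μ (r, j) : ℝ) / (hookLen μ (r, j) - 1) =
      (∏ u ∈ A with u < contentBox (r, c), (contentBox (r, c) - u)) /
        ∏ u ∈ R with u < contentBox (r, c), (contentBox (r, c) - u) := by
  set t := contentBox (r, c)
  set g : ℕ → ℝ := fun j => t - contentBox (μ.colLen j, j)
  have hφ := (strictMono_contentBox_colLen μ).injective
  have hgc : g c = 1 := by simp [g, t, contentBox_of_removable hb]
  have hg1 : ∀ j < c, g j - 1 ≠ 0 := fun j hj => by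
    have := (contentBox_colLen_add_one_lt_iff hb).2 hj
    simp only [g]
    linarith
  have hstep : ∀ j ∉ cornerCols μ c, j < c → g (j + 1) = g j - 1 := fun j hj hjc => by
    have heq : μ.colLen (j + 1) = μ.colLen j := by
      have := μ.colLen_anti j (j + 1) j.le_succ
      simp only [cornerCols, mem_filter, mem_range] at hj
      omega
    simp only [g, contentBox, heq]
    push_cast
    ring
  calc ∏ j ∈ range c, (hookLen μ (r, j) : ℝ) / (hookLen μ (r, j) - 1)
      = ∏ j ∈ range c, g j / (g j - 1) :=
        prod_congr rfl fun j hj => by rw [hookLen_row_of_removable hb (mem_range.1 hj).le]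
    _ = g 0 * ∏ j ∈ range c, g (j + 1) / (g j - 1) := by
        rw [← prod_range_div_sub_one_mul, hgc, mul_one]
    _ = g 0 * ∏ j ∈ cornerCols μ c, g (j + 1) / (g j - 1) := by
        rw [cornerCols, prod_filter_of_ne]
        intro j hj hne
        by_contra hdrop
        have hjc := mem_range.1 hj
        rw [hstep j (by simp [cornerCols, hdrop]) hjc, div_self (hg1 j hjc)] at hne
        exact hne rfl
    _ = _ := by
        rw [filter_addable_contents_lt hb hA, filter_removable_contents_lt hb hR,
          prod_insert (by simpa using fun j _ h => Nat.succ_ne_zero j (hφ h)),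
          prod_image fun a _ b _ h => by simpa using hφ h,
          prod_image fun a _ b _ h => hφ (add_right_cancel h), mul_div_assoc, prod_div_distrib]
        simp only [g, sub_sub]

lemma image_contentBox_eq_neg_image {P Q : ℕ × ℕ → Prop}
    (h : ∀ i j, P (i, j) ↔ Q (j, i)) :
    contentBox '' {a | P a} = Neg.neg '' (contentBox '' {a | Q a}) := by
  ext u
  simp only [Set.mem_image, Set.mem_ofPred_eq, exists_exists_and_eq_and]
  constructor
  · rintro ⟨⟨i, j⟩, hP, rfl⟩
    exact ⟨(j, i), (h i j).1 hP, (contentBox_swap (j, i)).symm⟩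
  · rintro ⟨⟨i, j⟩, hQ, rfl⟩
    exact ⟨(j, i), (h j i).2 hQ, contentBox_swap (i, j)⟩

theorem prod_hookLen_col_div (hb : Removable μ (r, c)) {A R : Finset ℝ}
    (hA : (A : Set ℝ) = contentBox '' {a | Addable μ a})
    (hR : (R : Set ℝ) = contentBox '' {b | Removable μ b}) :
    ∏ i ∈ range r, (hookLen μ (i, c) : ℝ) / (hookLen μ (i, c) - 1) =
      (∏ u ∈ A with contentBox (r, c) < u, (u - contentBox (r, c))) /
        ∏ u ∈ R with contentBox (r, c) < u, (u - contentBox (r, c)) := by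
  have h := prod_hookLen_row_div (removable_transpose_iff.2 hb) (A := A.image Neg.neg)
    (R := R.image Neg.neg)
    (by rw [coe_image, hA, image_contentBox_eq_neg_image fun _ _ => addable_transpose_iff])
    (by rw [coe_image, hR, image_contentBox_eq_neg_image fun _ _ => removable_transpose_iff])
  have hcorner : contentBox (c, r) = -contentBox (r, c) := contentBox_swap (r, c)
  simpa only [hookLen_transpose, hcorner, prod_image_neg_filter_lt] using h

lemma rowLen_of_cells_eq_erase (hb : Removable μ (r, c)) (hν : ν.cells = μ.cells.erase (r, c))
    (i : ℕ) : ν.rowLen i = if i = r then c else μ.rowLen i := by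
  obtain ⟨-, hrow⟩ := removable_iff.1 hb
  refine eq_of_forall_lt_iff fun j => ?_
  rw [← YoungDiagram.mem_iff_lt_rowLen, ← YoungDiagram.mem_cells, hν, mem_erase,
    YoungDiagram.mem_cells, YoungDiagram.mem_iff_lt_rowLen]
  split_ifs with h
  · subst h
    simp
    omega
  · simp [h]

lemma colLen_of_cells_eq_erase (hb : Removable μ (r, c)) (hν : ν.cells = μ.cells.erase (r, c))
    (j : ℕ) : ν.colLen j = if j = c then r else μ.colLen j := by
  obtain ⟨hcol, -⟩ := removable_iff.1 hb
  refine eq_of_forall_lt_iff fun i => ?_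
  rw [← YoungDiagram.mem_iff_lt_colLen, ← YoungDiagram.mem_cells, hν, mem_erase,
    YoungDiagram.mem_cells, YoungDiagram.mem_iff_lt_colLen]
  split_ifs with h
  · subst h
    simp
    omega
  · simp [h]

lemma hookLen_of_cells_eq_erase (hb : Removable μ (r, c)) (hν : ν.cells = μ.cells.erase (r, c))
    (hij : (i, j) ∈ ν) :
    hookLen μ (i, j) = hookLen ν (i, j) + if i = r ∨ j = c then 1 else 0 := by
  have hi := YoungDiagram.mem_iff_lt_colLen.1 hij
  have hj := YoungDiagram.mem_iff_lt_rowLen.1 hij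
  obtain ⟨hcol, hrow⟩ := removable_iff.1 hb
  simp only [rowLen_of_cells_eq_erase hb hν, colLen_of_cells_eq_erase hb hν] at hi hj
  simp only [hookLen, armLen, legLen, rowLen_of_cells_eq_erase hb hν,
    colLen_of_cells_eq_erase hb hν]
  split_ifs at hi hj ⊢ <;> subst_vars <;> omega

theorem prod_hookLen_div_prod_hookLen_of_cells_eq_erase (hb : Removable μ (r, c))
    (hν : ν.cells = μ.cells.erase (r, c)) :
    (∏ b ∈ μ.cells, (hookLen μ b : ℝ)) / ∏ b ∈ ν.cells, (hookLen ν b : ℝ) =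
      (∏ j ∈ range c, (hookLen μ (r, j) : ℝ) / (hookLen μ (r, j) - 1)) *
        ∏ i ∈ range r, (hookLen μ (i, c) : ℝ) / (hookLen μ (i, c) - 1) := by
  have hcorner : hookLen μ (r, c) = 1 := by
    simp only [hookLen, armLen, legLen, removable_iff.1 hb]
    omega
  have hrow : ν.row r = {r} ×ˢ range c := by
    rw [YoungDiagram.row_eq_prod, rowLen_of_cells_eq_erase hb hν, if_pos rfl]
  have hcol : ν.col c = range r ×ˢ {c} := by
    rw [YoungDiagram.col_eq_prod, colLen_of_cells_eq_erase hb hν, if_pos rfl]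
  have hdisj : Disjoint (ν.row r) (ν.col c) := by
    rw [hrow, hcol, disjoint_left]
    rintro ⟨i, j⟩
    simp only [mem_product, mem_singleton, mem_range]
    omega
  have hhook : ∀ b ∈ ν.cells, (hookLen μ b : ℝ) =
      hookLen ν b + if b ∈ ν.row r ∪ ν.col c then 1 else 0 := by
    rintro ⟨i, j⟩ hij
    rw [hookLen_of_cells_eq_erase hb hν hij]
    simp [YoungDiagram.mem_row_iff, YoungDiagram.mem_col_iff, (YoungDiagram.mem_cells _).1 hij]
  have hsub : ν.row r ∪ ν.col c ⊆ ν.cells :=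
    union_subset (filter_subset _ _) (filter_subset _ _)
  calc (∏ b ∈ μ.cells, (hookLen μ b : ℝ)) / ∏ b ∈ ν.cells, (hookLen ν b : ℝ)
      = ∏ b ∈ ν.cells, (hookLen μ b : ℝ) / hookLen ν b := by
        rw [← mul_prod_erase _ _ hb.1, ← hν, hcorner, Nat.cast_one, one_mul, prod_div_distrib]
    _ = ∏ b ∈ ν.row r ∪ ν.col c, (hookLen μ b : ℝ) / hookLen ν b := by
        refine (prod_subset hsub fun b hb hnot => ?_).symm
        rw [hhook b hb, if_neg hnot, add_zero, div_self (Nat.cast_pos.2 (hookLen_pos ν b)).ne']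
    _ = ∏ b ∈ ν.row r ∪ ν.col c, (hookLen μ b : ℝ) / (hookLen μ b - 1) := by
        refine prod_congr rfl fun b hb => ?_
        rw [hhook b (hsub hb), if_pos hb]
        ring
    _ = _ := by
        rw [prod_union hdisj, hrow, hcol, prod_product, prod_product, prod_singleton]
        simp only [prod_singleton]

lemma hookDim_div_hookDim_of_cells_eq_erase {b : ℕ × ℕ}
    (hb : b ∈ μ.cells) (hν : ν.cells = μ.cells.erase b) :
    hookDim ν / hookDim μ =
      (∏ b ∈ μ.cells, (hookLen μ b : ℝ)) / (∏ b ∈ ν.cells, (hookLen ν b : ℝ)) /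
        μ.card := by
  have hcard : μ.card = ν.card + 1 := by
    simp only [YoungDiagram.card, hν, card_erase_add_one hb]
  have hne : ∀ κ : YoungDiagram, ∏ b ∈ κ.cells, (hookLen κ b : ℝ) ≠ 0 := fun κ =>
    prod_ne_zero_iff.2 fun b _ => (Nat.cast_pos.2 (hookLen_pos κ b)).ne'
  have := hne μ
  have := hne ν
  simp only [hookDim, prod_inv_distrib, hcard, Nat.factorial_succ]
  push_cast
  field_simp

end

def Interlace (d : ℕ) (x y : ℕ → ℝ) : Prop :=
  ∀ m, 1 ≤ m → m ≤ d - 1 → x m < y m ∧ y m < x (m + 1)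

namespace Interlace

variable {d k : ℕ} {x y : ℕ → ℝ}

lemma strictMonoOn_left (h : Interlace d x y) : StrictMonoOn x ↑(Icc 1 d) := by
  rw [coe_Icc]
  refine strictMonoOn_of_lt_succ Set.ordConnected_Icc fun m _ hm hm' => ?_
  rw [Order.succ_eq_add_one] at hm' ⊢
  have := h m hm.1 (by simp at hm'; omega)
  linarith

lemma strictMonoOn_right (h : Interlace d x y) :
    StrictMonoOn y ↑(Icc 1 (d - 1)) := by
  rw [coe_Icc]
  refine strictMonoOn_of_lt_succ Set.ordConnected_Icc fun m _ hm hm' => ?_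
  rw [Order.succ_eq_add_one] at hm' ⊢
  have := h m hm.1 (by simp at hm'; omega)
  have := h (m + 1) (by omega) hm'.2
  linarith

lemma left_lt_right_iff (h : Interlace d x y) {i : ℕ} (hi : 1 ≤ i) (hid : i ≤ d)
    (hk : 1 ≤ k) (hkd : k ≤ d - 1) : x i < y k ↔ i ≤ k := by
  have hmono := h.strictMonoOn_left.monotoneOn
  constructor
  · intro hxy
    by_contra! hki
    have := hmono (by simp; omega) (by simp; omega) hki
    linarith [(h k hk hkd).2]
  · intro hik
    have := hmono (by simp; omega) (by simp; omega) hik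
    linarith [(h k hk hkd).1]

lemma right_lt_left_iff (h : Interlace d x y) {i : ℕ} (hi : 1 ≤ i) (hid : i ≤ d)
    (hk : 1 ≤ k) (hkd : k ≤ d - 1) : y k < x i ↔ k < i := by
  constructor
  · intro hyx
    by_contra! hik
    exact lt_asymm hyx ((h.left_lt_right_iff hi hid hk hkd).2 hik)
  · intro hki
    have := h.strictMonoOn_left.monotoneOn (by simp; omega) (by simp; omega) hki
    linarith [(h k hk hkd).2]

lemma prod_filter_left_lt (h : Interlace d x y) (hk : 1 ≤ k) (hkd : k ≤ d - 1) :
    ∏ u ∈ (Icc 1 d).image x with u < y k, (y k - u) = ∏ i ∈ Icc 1 k, (y k - x i) := by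
  rw [prod_filter_image_of_injOn h.strictMonoOn_left.injOn,
    filter_Icc_eq_Icc (b' := k) le_rfl (by omega) fun i hi hid => by
      rw [h.left_lt_right_iff hi hid hk hkd]
      omega]

lemma prod_filter_lt_left (h : Interlace d x y) (hk : 1 ≤ k) (hkd : k ≤ d - 1) :
    ∏ u ∈ (Icc 1 d).image x with y k < u, (u - y k) = ∏ i ∈ Icc (k + 1) d, (x i - y k) := by
  rw [prod_filter_image_of_injOn h.strictMonoOn_left.injOn,
    filter_Icc_eq_Icc (a' := k + 1) (by omega) le_rfl fun i hi hid => by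
      rw [h.right_lt_left_iff hi hid hk hkd]
      omega]

lemma prod_filter_right_lt (h : Interlace d x y) (hk : 1 ≤ k) (hkd : k ≤ d - 1) :
    ∏ u ∈ (Icc 1 (d - 1)).image y with u < y k, (y k - u) =
      ∏ i ∈ Icc 1 (k - 1), (y k - y i) := by
  rw [prod_filter_image_of_injOn h.strictMonoOn_right.injOn,
    filter_Icc_eq_Icc (b' := k - 1) le_rfl (by omega) fun i hi hid => by
      rw [h.strictMonoOn_right.lt_iff_lt (by simp; omega) (by simp; omega)]
      omega]

lemma prod_filter_lt_right (h : Interlace d x y) (hk : 1 ≤ k) (hkd : k ≤ d - 1) :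
    ∏ u ∈ (Icc 1 (d - 1)).image y with y k < u, (u - y k) =
      ∏ i ∈ Icc (k + 1) (d - 1), (y i - y k) := by
  rw [prod_filter_image_of_injOn h.strictMonoOn_right.injOn,
    filter_Icc_eq_Icc (a' := k + 1) (by omega) le_rfl fun i hi hid => by
      rw [h.strictMonoOn_right.lt_iff_lt (by simp; omega) (by simp; omega)]
      omega]

theorem prod_filter_div_mul_prod_filter_div (h : Interlace d x y) (hk : 1 ≤ k)
    (hkd : k ≤ d - 1) :
    (∏ u ∈ (Icc 1 d).image x with u < y k, (y k - u)) /
        (∏ u ∈ (Icc 1 (d - 1)).image y with u < y k, (y k - u)) *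
      ((∏ u ∈ (Icc 1 d).image x with y k < u, (u - y k)) /
        ∏ u ∈ (Icc 1 (d - 1)).image y with y k < u, (u - y k)) =
    (x d - y k) * (y k - x 1) * (∏ i ∈ Icc 1 (k - 1), (y k - x (i + 1)) / (y k - y i)) *
      ∏ j ∈ Icc (k + 1) (d - 1), (y k - x j) / (y k - y j) := by
  have hbot : ∏ i ∈ Icc 1 k, (y k - x i) =
      (y k - x 1) * ∏ i ∈ Icc 1 (k - 1), (y k - x (i + 1)) := by
    rw [← insert_Icc_add_one_left_eq_Icc hk, prod_insert (by simp)]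
    congr 1
    rw [← Nat.sub_add_cancel hk, ← map_add_right_Icc, prod_map, Nat.sub_add_cancel hk]
    rfl
  have htop : ∏ i ∈ Icc (k + 1) d, (x i - y k) =
      (∏ i ∈ Icc (k + 1) (d - 1), (x i - y k)) * (x d - y k) := by
    obtain ⟨e, rfl⟩ : ∃ e, d = e + 1 := ⟨d - 1, by omega⟩
    exact prod_Icc_succ_top (by omega) _
  have hsign : ∏ j ∈ Icc (k + 1) (d - 1), (y k - x j) / (y k - y j) =
      ∏ j ∈ Icc (k + 1) (d - 1), (x j - y k) / (y j - y k) :=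
    prod_congr rfl fun j _ => by rw [← neg_sub, ← neg_sub (y j), neg_div_neg_eq]
  rw [h.prod_filter_left_lt hk hkd, h.prod_filter_right_lt hk hkd, h.prod_filter_lt_left hk hkd,
    h.prod_filter_lt_right hk hkd, hbot, htop, hsign, prod_div_distrib, prod_div_distrib]
  ring

end Interlace

lemma coe_image_Icc_eq_image_contentBox {P : ℕ × ℕ → Prop} {f : ℕ → ℝ} {a b : ℕ}
    (h₁ : ∀ m, a ≤ m → m ≤ b → ∃ c, P c ∧ contentBox c = f m)
    (h₂ : ∀ c, P c → ∃ m, a ≤ m ∧ m ≤ b ∧ contentBox c = f m) :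
    (((Icc a b).image f : Finset ℝ) : Set ℝ) = contentBox '' {c | P c} := by
  ext u
  simp only [coe_image, coe_Icc, Set.mem_image, Set.mem_Icc, Set.mem_ofPred_eq]
  constructor
  · rintro ⟨m, ⟨hma, hmb⟩, rfl⟩
    exact h₁ m hma hmb
  · rintro ⟨c, hc, rfl⟩
    obtain ⟨m, hma, hmb, hm⟩ := h₂ c hc
    exact ⟨m, ⟨hma, hmb⟩, hm.symm⟩

theorem hook_ratio_eq_analytic_cotransition_general (Λ lam : YoungDiagram)
    (n : ℕ) (hn : n = Λ.card)
    (d k : ℕ) (hk1 : 1 ≤ k) (hk2 : k ≤ d - 1)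
    (x y : ℕ → ℝ)
    -- the sequences interlace: x₁ < y₁ < x₂ < ⋯ < y_{d-1} < x_d
    (hinter : ∀ m, 1 ≤ m → m ≤ d - 1 → x m < y m ∧ y m < x (m + 1))
    -- x₁,…,x_d are exactly the contents of the addable boxes of Λ
    (hx1 : ∀ m, 1 ≤ m → m ≤ d → ∃ c, Addable Λ c ∧ contentBox c = x m)
    (hx2 : ∀ c, Addable Λ c → ∃ m, 1 ≤ m ∧ m ≤ d ∧ contentBox c = x m)
    -- y₁,…,y_{d-1} are exactly the contents of the removable boxes of Λ
    (hy1 : ∀ m, 1 ≤ m → m ≤ d - 1 → ∃ c, Removable Λ c ∧ contentBox c = y m)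
    (hy2 : ∀ c, Removable Λ c → ∃ m, 1 ≤ m ∧ m ≤ d - 1 ∧ contentBox c = y m)
    -- λ is obtained from Λ by removing the removable box of content y k
    (b0 : ℕ × ℕ) (hb0 : Removable Λ b0) (hb0y : contentBox b0 = y k)
    (hlam : lam.cells = Λ.cells.erase b0) :
    ((∏ b ∈ Λ.cells, (hookLen Λ b : ℝ)) / ∏ b ∈ lam.cells, (hookLen lam b : ℝ) =
      (x d - y k) * (y k - x 1) *
        (∏ i ∈ Finset.Icc 1 (k - 1), (y k - x (i + 1)) / (y k - y i)) *
        ∏ j ∈ Finset.Icc (k + 1) (d - 1), (y k - x j) / (y k - y j)) ∧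
    (hookDim lam / hookDim Λ =
      (x d - y k) * (y k - x 1) / (n : ℝ) *
        (∏ i ∈ Finset.Icc 1 (k - 1), (y k - x (i + 1)) / (y k - y i)) *
        ∏ j ∈ Finset.Icc (k + 1) (d - 1), (y k - x j) / (y k - y j)) := by
  obtain ⟨r, c⟩ := b0
  have hA := coe_image_Icc_eq_image_contentBox hx1 hx2
  have hR := coe_image_Icc_eq_image_contentBox hy1 hy2
  have hratio := prod_hookLen_div_prod_hookLen_of_cells_eq_erase hb0 hlam
  rw [prod_hookLen_row_div hb0 hA hR, prod_hookLen_col_div hb0 hA hR, hb0y,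
    Interlace.prod_filter_div_mul_prod_filter_div hinter hk1 hk2] at hratio
  refine ⟨hratio, ?_⟩
  rw [hookDim_div_hookDim_of_cells_eq_erase hb0.1 hlam, hratio, hn]
  ring

/-- For `λ` obtained from `Λ` (with `n = |Λ|`) by removing the removable box of content `y_k`:
`∏_{b∈Λ} h_Λ(b) / ∏_{b∈λ} h_λ(b)
  = (x_d − y_k)(y_k − x_1) ∏_{i=1}^{k-1} (y_k−x_{i+1})/(y_k−y_i) ∏_{j=k+1}^{d-1} (y_k−x_j)/(y_k−y_j)`,
and equivalently, with `f_λ = |λ|! ∏_{b∈λ} h_λ(b)⁻¹`,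
`f_λ/f_Λ = (x_d−y_k)(y_k−x_1)/n · ∏_{i=1}^{k-1} (y_k−x_{i+1})/(y_k−y_i) ∏_{j=k+1}^{d-1} (y_k−x_j)/(y_k−y_j)`,
where `x₁ < y₁ < ⋯ < y_{d−1} < x_d` are the interlacing corner-content sequences of `Λ`. -/
theorem hook_ratio_eq_analytic_cotransition (Λ lam : YoungDiagram)
    (n : ℕ) (hn : n = Λ.card)
    (d k : ℕ) (hd : 1 ≤ d) (hk1 : 1 ≤ k) (hk2 : k ≤ d - 1)
    (x y : ℕ → ℝ)
    -- the sequences interlace: x₁ < y₁ < x₂ < ⋯ < y_{d-1} < x_d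
    (hinter : ∀ m, 1 ≤ m → m ≤ d - 1 → x m < y m ∧ y m < x (m + 1))
    -- x₁,…,x_d are exactly the contents of the addable boxes of Λ
    (hx1 : ∀ m, 1 ≤ m → m ≤ d → ∃ c, Addable Λ c ∧ contentBox c = x m)
    (hx2 : ∀ c, Addable Λ c → ∃ m, 1 ≤ m ∧ m ≤ d ∧ contentBox c = x m)
    -- y₁,…,y_{d-1} are exactly the contents of the removable boxes of Λ
    (hy1 : ∀ m, 1 ≤ m → m ≤ d - 1 → ∃ c, Removable Λ c ∧ contentBox c = y m)
    (hy2 : ∀ c, Removable Λ c → ∃ m, 1 ≤ m ∧ m ≤ d - 1 ∧ contentBox c = y m)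
    -- λ is obtained from Λ by removing the removable box of content y k
    (b0 : ℕ × ℕ) (hb0 : Removable Λ b0) (hb0y : contentBox b0 = y k)
    (hlam : lam.cells = Λ.cells.erase b0) :
    ((∏ b ∈ Λ.cells, (hookLen Λ b : ℝ)) / ∏ b ∈ lam.cells, (hookLen lam b : ℝ) =
      (x d - y k) * (y k - x 1) *
        (∏ i ∈ Finset.Icc 1 (k - 1), (y k - x (i + 1)) / (y k - y i)) *
        ∏ j ∈ Finset.Icc (k + 1) (d - 1), (y k - x j) / (y k - y j)) ∧
    (hookDim lam / hookDim Λ =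
      (x d - y k) * (y k - x 1) / (n : ℝ) *
        (∏ i ∈ Finset.Icc 1 (k - 1), (y k - x (i + 1)) / (y k - y i)) *
        ∏ j ∈ Finset.Icc (k + 1) (d - 1), (y k - x j) / (y k - y j)) :=
  hook_ratio_eq_analytic_cotransition_general Λ lam n hn d k hk1 hk2 x y hinter hx1 hx2 hy1 hy2 b0
    hb0 hb0y hlam
end

section
/- Let x_1 < x_2 < ⋯ < x_d and y_1 < y_2 < ⋯ < y_{d-1} be real numbers, all 2d−1 of them distinct, and for k = 1,…,d set μ_k = ∏_{i=1}^{k-1} (x_k−y_i)/(x_k−x_i) · ∏_{j=k+1}^{d} (x_k−y_{j-1})/(x_k−x_j). Then μ_k > 0 for all k = 1,…,d if and only if the sequences interlace, i.e. x_1 < y_1 < x_2 < ⋯ < x_{d-1} < y_{d-1} < x_d. -/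
/-!
Let `c(k)` be the number of `y_i` below `x_k`. The denominators of `μ_k` have signs fixed by the
order of the `x`'s, so its negative factors are those with `y_i > x_k` for `i < k` and with
`y_i < x_k` for `i ≥ k`; counting them shows that `μ_k > 0` iff `c(k) ≡ k - 1 (mod 2)`. As `c` is
nondecreasing with `c(d) ≤ d - 1`, alternating parity forces `c(k) = k - 1` for every `k`, and for
increasing `y` this is exactly interlacing.
-/

/-- The transition weight
`μ_k = ∏_{i=1}^{k-1} (x_k−y_i)/(x_k−x_i) · ∏_{j=k+1}^{d} (x_k−y_{j-1})/(x_k−x_j)`. -/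
noncomputable def muWeight (d : ℕ) (x y : ℕ → ℝ) (k : ℕ) : ℝ :=
  (∏ i ∈ Finset.Icc 1 (k - 1), (x k - y i) / (x k - x i)) *
    ∏ j ∈ Finset.Icc (k + 1) d, (x k - y (j - 1)) / (x k - x j)

open Finset

theorem mul_pos_iff_of_ne_zero {R : Type*} [Ring R] [LinearOrder R] [IsStrictOrderedRing R]
    {a b : R} (ha : a ≠ 0) (hb : b ≠ 0) : 0 < a * b ↔ (0 < a ↔ 0 < b) := by
  rw [mul_pos_iff, ← not_le (a := a), ← not_le (a := b), ha.le_iff_lt, hb.le_iff_lt]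
  tauto

theorem Finset.prod_pos_iff_even_card_filter_neg {ι R : Type*} [CommRing R] [LinearOrder R]
    [IsStrictOrderedRing R] {s : Finset ι} {f : ι → R} (hf : ∀ i ∈ s, f i ≠ 0) :
    0 < ∏ i ∈ s, f i ↔ Even #{i ∈ s | f i < 0} := by
  classical
  induction s using Finset.induction_on with
  | empty => simp
  | insert a s ha ih =>
    have hfs : ∀ i ∈ s, f i ≠ 0 := fun i hi ↦ hf i (mem_insert_of_mem hi)
    have hfa : f a ≠ 0 := hf a (mem_insert_self a s)
    rw [prod_insert ha, mul_pos_iff_of_ne_zero hfa (prod_ne_zero_iff.2 hfs), ih hfs, filter_insert]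
    split_ifs with hneg
    · rw [card_insert_of_notMem fun h ↦ ha (mem_filter.1 h).1, Nat.even_add_one]
      simp [hneg.not_gt]
    · simp [hfa.lt_or_gt.resolve_left hneg]

theorem eq_sub_one_of_monotoneOn_of_even {c : ℕ → ℕ} {d : ℕ} (hc : MonotoneOn c (Set.Icc 1 d))
    (hcd : c d ≤ d - 1) (heven : ∀ k ∈ Set.Icc 1 d, Even (c k + (k - 1))) :
    ∀ k ∈ Set.Icc 1 d, c k = k - 1 := by
  have hstep : ∀ k, k ∈ Set.Icc 1 d → k + 1 ∈ Set.Icc 1 d → c k + 1 ≤ c (k + 1) := by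
    intro k hk hk'
    obtain ⟨r, hr⟩ := heven k hk
    obtain ⟨s, hs⟩ := heven (k + 1) hk'
    have := hc hk hk' k.le_succ
    have := hk.1
    omega
  have hmono : MonotoneOn (fun k ↦ (c k : ℤ) - k) (Set.Icc 1 d) :=
    monotoneOn_of_le_add_one Set.ordConnected_Icc fun k _ hk hk' ↦ by
      have := hstep k hk hk'
      push_cast
      omega
  intro k hk
  have h1 := hmono ⟨le_rfl, hk.1.trans hk.2⟩ hk hk.1
  have h2 := hmono hk ⟨hk.1.trans hk.2, le_rfl⟩ hk.2
  obtain ⟨hk1, hkd⟩ := hk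
  simp only [Nat.cast_one] at h1 h2
  -- `c 1 - 1 ≥ -1` and `c d - d ≤ -1` pinch `c k - k` to `-1`
  omega

noncomputable def belowCount (n : ℕ) (y : ℕ → ℝ) (t : ℝ) : ℕ := #{i ∈ Icc 1 n | y i < t}

theorem belowCount_mono (n : ℕ) (y : ℕ → ℝ) : Monotone (belowCount n y) :=
  fun _ _ hst ↦ card_le_card <| monotone_filter_right _ fun _ _ h ↦ h.trans_le hst

theorem belowCount_le (n : ℕ) (y : ℕ → ℝ) (t : ℝ) : belowCount n y t ≤ n :=
  (card_filter_le _ _).trans (Nat.card_Icc 1 n).le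

theorem lt_iff_le_belowCount {n m : ℕ} {y : ℕ → ℝ} (hy : StrictMonoOn y (Set.Icc 1 n))
    (hm : m ∈ Icc 1 n) (t : ℝ) : y m < t ↔ m ≤ belowCount n y t := by
  rw [mem_Icc] at hm
  constructor
  · intro hlt
    calc m = #(Icc 1 m) := by simp
      _ ≤ belowCount n y t := card_le_card fun i hi ↦ by
        rw [mem_Icc] at hi
        refine mem_filter.2 ⟨mem_Icc.2 ⟨hi.1, hi.2.trans hm.2⟩, lt_of_le_of_lt ?_ hlt⟩
        exact hy.monotoneOn ⟨hi.1, hi.2.trans hm.2⟩ hm hi.2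
  · intro hle
    by_contra! hge
    have : belowCount n y t ≤ #(Icc 1 (m - 1)) := card_le_card fun i hi ↦ by
      rw [mem_filter, mem_Icc] at hi
      refine mem_Icc.2 ⟨hi.1.1, ?_⟩
      by_contra! hmi
      exact (hi.2.trans_le hge).not_ge (hy.monotoneOn hm hi.1 (by omega))
    rw [Nat.card_Icc] at this
    omega

theorem even_card_above_add_card_below_iff {n k : ℕ} {y : ℕ → ℝ} {t : ℝ} (hk : k ∈ Icc 1 (n + 1))
    (hyt : ∀ i ∈ Icc 1 n, t ≠ y i) :
    Even (#{i ∈ Icc 1 (k - 1) | t < y i} + #{i ∈ Icc k n | y i < t}) ↔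
      Even (belowCount n y t + (k - 1)) := by
  rw [mem_Icc] at hk
  have hsplit : belowCount n y t = #{i ∈ Icc 1 (k - 1) | y i < t} + #{i ∈ Icc k n | y i < t} := by
    have hunion : Icc 1 (k - 1) ∪ Icc k n = Icc 1 n := by
      ext; simp only [mem_union, mem_Icc]; omega
    have hdisj : Disjoint (Icc 1 (k - 1)) (Icc k n) :=
      disjoint_left.2 fun i ↦ by simp only [mem_Icc]; omega
    rw [belowCount, ← hunion, filter_union, card_union_of_disjoint (disjoint_filter_filter hdisj)]
  have hcompl : #{i ∈ Icc 1 (k - 1) | y i < t} + #{i ∈ Icc 1 (k - 1) | t < y i} = k - 1 := by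
    have habove : #{i ∈ Icc 1 (k - 1) | t < y i} = #{i ∈ Icc 1 (k - 1) | ¬y i < t} := by
      congr! 2 with i hi
      exact ⟨not_lt_of_gt, fun h ↦
        (not_lt.1 h).lt_of_ne (hyt i (Icc_subset_Icc_right (by omega) hi))⟩
    rw [habove, card_filter_add_card_filter_not, Nat.card_Icc]
    omega
  rw [show belowCount n y t + (k - 1) = #{i ∈ Icc 1 (k - 1) | t < y i} +
      #{i ∈ Icc k n | y i < t} + 2 * #{i ∈ Icc 1 (k - 1) | y i < t} by omega]
  simp [parity_simps]

theorem muWeight_eq_prod_mul_prod {d k : ℕ} (x y : ℕ → ℝ) (hk : 1 ≤ k) (hkd : k ≤ d) :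
    muWeight d x y k = (∏ i ∈ Icc 1 (k - 1), (x k - y i) / (x k - x i)) *
      ∏ i ∈ Icc k (d - 1), (x k - y i) / (x k - x (i + 1)) := by
  have hIcc : Icc (k + 1) d = (Icc k (d - 1)).map (addRightEmbedding 1) := by
    rw [map_add_right_Icc, Nat.sub_add_cancel (hk.trans hkd)]
  rw [muWeight, hIcc, prod_map]
  simp only [addRightEmbedding_apply, Nat.add_sub_cancel]

theorem muWeight_pos_iff_even_card {d k : ℕ} {x y : ℕ → ℝ} (hx : StrictMonoOn x (Set.Icc 1 d))
    (hk : k ∈ Icc 1 d) (hxy : ∀ i ∈ Icc 1 (d - 1), x k ≠ y i) :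
    0 < muWeight d x y k ↔
      Even (#{i ∈ Icc 1 (k - 1) | x k < y i} + #{i ∈ Icc k (d - 1) | y i < x k}) := by
  obtain ⟨hk1, hkd⟩ := mem_Icc.1 hk
  have hlow_mem : ∀ i ∈ Icc 1 (k - 1), i ∈ Icc 1 (d - 1) := fun i hi ↦ by
    simp only [mem_Icc] at hi ⊢; omega
  have hhigh_mem : ∀ i ∈ Icc k (d - 1), i ∈ Icc 1 (d - 1) := fun i hi ↦ by
    simp only [mem_Icc] at hi ⊢; omega
  have hx_lt : ∀ i ∈ Icc 1 (k - 1), 0 < x k - x i := fun i hi ↦ by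
    rw [mem_Icc] at hi; exact sub_pos.2 <| hx ⟨hi.1, by omega⟩ ⟨hk1, hkd⟩ (by omega)
  have hx_gt : ∀ i ∈ Icc k (d - 1), x k - x (i + 1) < 0 := fun i hi ↦ by
    rw [mem_Icc] at hi; exact sub_neg.2 <| hx ⟨hk1, hkd⟩ ⟨by omega, by omega⟩ (by omega)
  have hlow_ne : ∀ i ∈ Icc 1 (k - 1), (x k - y i) / (x k - x i) ≠ 0 := fun i hi ↦
    div_ne_zero (sub_ne_zero.2 (hxy i (hlow_mem i hi))) (hx_lt i hi).ne'
  have hhigh_ne : ∀ i ∈ Icc k (d - 1), (x k - y i) / (x k - x (i + 1)) ≠ 0 := fun i hi ↦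
    div_ne_zero (sub_ne_zero.2 (hxy i (hhigh_mem i hi))) (hx_gt i hi).ne
  have hlow : 0 < ∏ i ∈ Icc 1 (k - 1), (x k - y i) / (x k - x i) ↔
      Even #{i ∈ Icc 1 (k - 1) | x k < y i} := by
    rw [prod_pos_iff_even_card_filter_neg hlow_ne]
    congr! 3 with i hi
    simp [div_neg_iff, hx_lt i hi, (hx_lt i hi).not_gt]
  have hhigh : 0 < ∏ i ∈ Icc k (d - 1), (x k - y i) / (x k - x (i + 1)) ↔
      Even #{i ∈ Icc k (d - 1) | y i < x k} := by
    rw [prod_pos_iff_even_card_filter_neg hhigh_ne]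
    congr! 3 with i hi
    simp [div_neg_iff, hx_gt i hi, (hx_gt i hi).not_gt]
  rw [muWeight_eq_prod_mul_prod x y hk1 hkd, mul_pos_iff_of_ne_zero (prod_ne_zero_iff.2 hlow_ne)
    (prod_ne_zero_iff.2 hhigh_ne), hlow, hhigh, Nat.even_add]

theorem interlacing_iff_belowCount_eq {d : ℕ} {x y : ℕ → ℝ} (hx : MonotoneOn x (Set.Icc 1 d))
    (hy : StrictMonoOn y (Set.Icc 1 (d - 1)))
    (hxy : ∀ k ∈ Icc 1 d, ∀ i ∈ Icc 1 (d - 1), x k ≠ y i) :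
    (∀ m, 1 ≤ m → m ≤ d - 1 → x m < y m ∧ y m < x (m + 1)) ↔
      ∀ k ∈ Icc 1 d, belowCount (d - 1) y (x k) = k - 1 := by
  constructor
  · intro hint k hk
    rw [mem_Icc] at hk
    have : {i ∈ Icc 1 (d - 1) | y i < x k} = Icc 1 (k - 1) := by
      ext i
      simp only [mem_filter, mem_Icc]
      constructor
      · rintro ⟨⟨hi1, hid⟩, hlt⟩
        by_contra! hki
        exact hlt.not_gt <| (hx hk ⟨hi1, by omega⟩ (by omega)).trans_lt (hint i hi1 hid).1
      · rintro ⟨hi1, hik⟩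
        exact ⟨⟨hi1, by omega⟩, (hint i hi1 (by omega)).2.trans_le
          (hx ⟨by omega, by omega⟩ hk (by omega))⟩
    rw [belowCount, this, Nat.card_Icc]
    omega
  · intro hc m hm1 hmd
    have hm : m ∈ Icc 1 (d - 1) := mem_Icc.2 ⟨hm1, hmd⟩
    refine ⟨(not_lt.1 ?_).lt_of_ne (hxy m (mem_Icc.2 ⟨hm1, by omega⟩) m hm), ?_⟩
    · rw [lt_iff_le_belowCount hy hm, hc m (mem_Icc.2 ⟨hm1, by omega⟩)]
      omega
    · rw [lt_iff_le_belowCount hy hm, hc (m + 1) (mem_Icc.2 ⟨by omega, by omega⟩)]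
      omega

theorem mu_pos_iff_interlacing_general (d : ℕ) (x y : ℕ → ℝ)
    (hx : ∀ i j, 1 ≤ i → i < j → j ≤ d → x i < x j)
    (hy : ∀ i j, 1 ≤ i → i < j → j ≤ d - 1 → y i < y j)
    (hxy : ∀ k ∈ Finset.Icc 1 d, ∀ i ∈ Finset.Icc 1 (d - 1), x k ≠ y i) :
    (∀ k ∈ Finset.Icc 1 d, 0 < muWeight d x y k) ↔
      (∀ m, 1 ≤ m → m ≤ d - 1 → x m < y m ∧ y m < x (m + 1)) := by
  have hx' : StrictMonoOn x (Set.Icc 1 d) := fun i hi j hj hij ↦ hx i j hi.1 hij hj.2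
  have hy' : StrictMonoOn y (Set.Icc 1 (d - 1)) := fun i hi j hj hij ↦ hy i j hi.1 hij hj.2
  have hμ : ∀ k ∈ Icc 1 d,
      0 < muWeight d x y k ↔ Even (belowCount (d - 1) y (x k) + (k - 1)) := fun k hk ↦
    (muWeight_pos_iff_even_card hx' hk (hxy k hk)).trans <|
      even_card_above_add_card_below_iff (by simp only [mem_Icc] at hk ⊢; omega) (hxy k hk)
  rw [interlacing_iff_belowCount_eq hx'.monotoneOn hy' hxy]
  constructor
  · intro hpos k hk
    exact eq_sub_one_of_monotoneOn_of_even ((belowCount_mono _ _).comp_monotoneOn hx'.monotoneOn)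
      (belowCount_le _ _ _) (fun k hk ↦ (hμ k (mem_Icc.2 hk)).1 (hpos k (mem_Icc.2 hk)))
      k (mem_Icc.1 hk)
  · intro hc k hk
    rw [hμ k hk, hc k hk]
    exact ⟨k - 1, rfl⟩

/-- For `x₁ < ⋯ < x_d` and `y₁ < ⋯ < y_{d−1}`, all `2d−1` numbers distinct, the transition
weights `μ_k` are all positive iff the sequences interlace:
`x₁ < y₁ < x₂ < ⋯ < x_{d−1} < y_{d−1} < x_d`. -/
theorem mu_pos_iff_interlacing (d : ℕ) (hd : 1 ≤ d) (x y : ℕ → ℝ)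
    (hx : ∀ i j, 1 ≤ i → i < j → j ≤ d → x i < x j)
    (hy : ∀ i j, 1 ≤ i → i < j → j ≤ d - 1 → y i < y j)
    (hxy : ∀ k ∈ Finset.Icc 1 d, ∀ i ∈ Finset.Icc 1 (d - 1), x k ≠ y i) :
    (∀ k ∈ Finset.Icc 1 d, 0 < muWeight d x y k) ↔
      (∀ m, 1 ≤ m → m ≤ d - 1 → x m < y m ∧ y m < x (m + 1)) :=
  mu_pos_iff_interlacing_general d x y hx hy hxy
end

section
/- Let x_1 < y_1 < x_2 < ⋯ < x_{d-1} < y_{d-1} < x_d be a pair of interlacing sequences with transition weights μ_k, center c and area A. Then the mean of the transition distribution is ∑_{k=1}^{d} x_k μ_k = c, and its variance is ∑_{k=1}^{d} x_k² μ_k − (∑_{k=1}^{d} x_k μ_k)² = A. -/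
open Finset Polynomial

namespace Polynomial

variable {R : Type*} [CommRing R]

theorem mul_mem_degreeLT {f g : R[X]} {m n : ℕ} (hg : g.degree ≤ m) (hf : f ∈ degreeLT R n) :
    g * f ∈ degreeLT R (m + n) := by
  rcases eq_or_ne g 0 with rfl | hg0
  · simp
  rw [mem_degreeLT] at *
  calc (g * f).degree ≤ g.degree + f.degree := degree_mul_le _ _
    _ < m + n := WithBot.add_lt_add_of_le_of_lt (degree_ne_bot.2 hg0) hg hf

theorem C_mul_X_pow_mem_degreeLT {m n : ℕ} (h : m < n) (a : R) : C a * X ^ m ∈ degreeLT R n :=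
  mem_degreeLT.2 ((degree_C_mul_X_pow_le m a).trans_lt (by exact_mod_cast h))

theorem mem_degreeLT_of_X_pow_mul_mem [Nontrivial R] {f : R[X]} {n k : ℕ}
    (h : X ^ k * f ∈ degreeLT R (n + k)) : f ∈ degreeLT R n := by
  rw [mem_degreeLT, mul_comm, degree_mul_X_pow] at *
  push_cast at h
  exact lt_of_add_lt_add_right h

end Polynomial

namespace Lagrange

variable {F : Type*} [Field F] {ι : Type*} [DecidableEq ι] {s : Finset ι} {v : ι → F}

theorem sum_eval_mul_nodalWeight_of_degree_lt (hvs : Set.InjOn v s) {f : F[X]}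
    (hf : f.degree < #s) : ∑ i ∈ s, f.eval (v i) * nodalWeight s v i = f.coeff (#s - 1) := by
  conv_rhs => rw [eq_interpolate hvs hf, interpolate_apply, finsetSum_coeff]
  refine sum_congr rfl fun i hi => ?_
  have hdeg : (nodal (s.erase i) v).natDegree = #s - 1 := by
    rw [natDegree_nodal, card_erase_of_mem hi]
  rw [coeff_C_mul, basis_eq_prod_sub_inv_mul_nodal_div hi, ← nodal_erase_eq_nodal_div hi,
    coeff_C_mul, ← hdeg, nodal_monic.coeff_natDegree, mul_one, nodalWeight]

theorem sum_eval_mul_nodalWeight_eq_of_sub_mem_degreeLT (hvs : Set.InjOn v s) {n : ℕ}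
    (hs : #s = n + 1) {f g : F[X]} {a : F} (h : f - nodal s v * g - C a * X ^ n ∈ degreeLT F n) :
    ∑ i ∈ s, f.eval (v i) * nodalWeight s v i = a := by
  set r := f - nodal s v * g
  have hr : r ∈ degreeLT F (n + 1) := by
    simpa using add_mem (degreeLT_mono n.le_succ h) (C_mul_X_pow_mem_degreeLT n.lt_succ_self a)
  have hcoeff : r.coeff n = a := by
    simpa [sub_eq_zero] using coeff_eq_zero_of_degree_lt (n := n) (mem_degreeLT.1 h)
  have heval : ∀ i ∈ s, f.eval (v i) = r.eval (v i) := fun i hi => by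
    simp [r, eval_nodal_at_node hi]
  rw [sum_congr rfl fun i hi => by rw [heval i hi],
    sum_eval_mul_nodalWeight_of_degree_lt hvs (by rw [hs]; exact mem_degreeLT.1 hr), hs,
    Nat.add_sub_cancel, hcoeff]

/- The factor `X ^ 2` spares the exponents `#s - 1`, `#s - 2` of the top coefficients compared
here from truncated subtraction. -/
theorem X_sq_mul_nodal_sub_mem_degreeLT [CharZero F] (s : Finset ι) (v : ι → F) :
    X ^ 2 * nodal s v - X ^ #s * (X ^ 2 - C (∑ i ∈ s, v i) * X +
      C (((∑ i ∈ s, v i) ^ 2 - ∑ i ∈ s, v i ^ 2) / 2)) ∈ degreeLT F #s := by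
  induction s using Finset.induction_on with
  | empty => simp
  | insert a s ha ih =>
    set e := ∑ i ∈ s, v i
    set p := ∑ i ∈ s, v i ^ 2
    have he2 : C (((v a + e) ^ 2 - (v a ^ 2 + p)) / 2) = C ((e ^ 2 - p) / 2) + C (v a) * C e := by
      rw [← C_mul, ← C_add]; congr 1; ring
    have hstep : X ^ 2 * nodal (insert a s) v - X ^ #(insert a s) * (X ^ 2 -
          C (∑ i ∈ insert a s, v i) * X + C (((∑ i ∈ insert a s, v i) ^ 2 -
            ∑ i ∈ insert a s, v i ^ 2) / 2)) =
        (X - C (v a)) * (X ^ 2 * nodal s v - X ^ #s * (X ^ 2 - C e * X + C ((e ^ 2 - p) / 2))) -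
          C (v a * ((e ^ 2 - p) / 2)) * X ^ #s := by
      rw [nodal_insert_eq_nodal ha, card_insert_of_notMem ha, sum_insert ha, sum_insert ha, he2,
        C_add, C_mul]
      ring
    rw [hstep, card_insert_of_notMem ha, add_comm]
    exact sub_mem (mul_mem_degreeLT (degree_X_sub_C_le (v a)) ih)
      (C_mul_X_pow_mem_degreeLT (Nat.lt_add_of_pos_left one_pos) _)

variable [CharZero F] {κ : Type*} [DecidableEq κ] {t : Finset κ} {u : κ → F}

theorem sum_mul_eval_nodal_mul_nodalWeight (hvs : Set.InjOn v s) (hcard : #s = #t + 1) :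
    ∑ i ∈ s, v i * ((nodal t u).eval (v i) * nodalWeight s v i) =
      ∑ i ∈ s, v i - ∑ j ∈ t, u j := by
  have hP := X_sq_mul_nodal_sub_mem_degreeLT s v
  have hQ := X_sq_mul_nodal_sub_mem_degreeLT t u
  rw [hcard] at hP
  set n := #t
  set P := nodal s v
  set Q := nodal t u
  set ex := ∑ i ∈ s, v i
  set ey := ∑ j ∈ t, u j
  set qx := (ex ^ 2 - ∑ i ∈ s, v i ^ 2) / 2
  set qy := (ey ^ 2 - ∑ j ∈ t, u j ^ 2) / 2
  rw [sum_congr rfl fun i _ => show _ = (X * Q).eval (v i) * nodalWeight s v i by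
    rw [eval_mul, eval_X, mul_assoc]]
  refine sum_eval_mul_nodalWeight_eq_of_sub_mem_degreeLT hvs hcard (g := 1) ?_
  refine mem_degreeLT_of_X_pow_mul_mem (k := 2) ?_
  have key : X ^ 2 * (X * Q - P * 1 - C (ex - ey) * X ^ n) =
      X * (X ^ 2 * Q - X ^ n * (X ^ 2 - C ey * X + C qy)) -
        (X ^ 2 * P - X ^ (n + 1) * (X ^ 2 - C ex * X + C qx)) + C (qy - qx) * X ^ (n + 1) := by
    simp only [map_sub]; ring
  rw [key]
  refine add_mem (sub_mem ?_ (degreeLT_mono (by omega) hP)) (C_mul_X_pow_mem_degreeLT (by omega) _)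
  exact degreeLT_mono (by omega) (mul_mem_degreeLT (m := 1) degree_X_le hQ)

theorem sum_sq_mul_eval_nodal_mul_nodalWeight (hvs : Set.InjOn v s) (hcard : #s = #t + 1) :
    ∑ i ∈ s, v i ^ 2 * ((nodal t u).eval (v i) * nodalWeight s v i) =
      (∑ i ∈ s, v i ^ 2 - ∑ j ∈ t, u j ^ 2 + (∑ i ∈ s, v i - ∑ j ∈ t, u j) ^ 2) / 2 := by
  have hP := X_sq_mul_nodal_sub_mem_degreeLT s v
  have hQ := X_sq_mul_nodal_sub_mem_degreeLT t u
  rw [hcard] at hP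
  set n := #t
  set P := nodal s v
  set Q := nodal t u
  set ex := ∑ i ∈ s, v i
  set ey := ∑ j ∈ t, u j
  set qx := (ex ^ 2 - ∑ i ∈ s, v i ^ 2) / 2
  set qy := (ey ^ 2 - ∑ j ∈ t, u j ^ 2) / 2
  have ha : C ((∑ i ∈ s, v i ^ 2 - ∑ j ∈ t, u j ^ 2 + (ex - ey) ^ 2) / 2) =
      C qy - C qx + C (ex - ey) * C ex := by
    rw [← C_mul, ← C_sub, ← C_add]; congr 1; ring
  rw [sum_congr rfl fun i _ => show _ = (X ^ 2 * Q).eval (v i) * nodalWeight s v i by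
    rw [eval_mul, eval_pow, eval_X, mul_assoc]]
  refine sum_eval_mul_nodalWeight_eq_of_sub_mem_degreeLT hvs hcard (g := X + C (ex - ey)) ?_
  refine mem_degreeLT_of_X_pow_mul_mem (k := 2) ?_
  have key : X ^ 2 * (X ^ 2 * Q - P * (X + C (ex - ey)) -
        (C qy - C qx + C (ex - ey) * C ex) * X ^ n) =
      X ^ 2 * (X ^ 2 * Q - X ^ n * (X ^ 2 - C ey * X + C qy)) -
        (X + C (ex - ey)) * (X ^ 2 * P - X ^ (n + 1) * (X ^ 2 - C ex * X + C qx)) -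
          C ((ex - ey) * qx) * X ^ (n + 1) := by
    simp only [map_sub, map_mul]; ring
  rw [ha, key]
  refine sub_mem (sub_mem ?_ ?_) (C_mul_X_pow_mem_degreeLT (by omega) _)
  · exact degreeLT_mono (by omega) (mul_mem_degreeLT (degree_X_pow_le 2) hQ)
  · exact degreeLT_mono (by omega) (mul_mem_degreeLT (m := 1) (degree_X_add_C _).le hP)

end Lagrange

theorem muWeight_eq_eval_nodal_mul_nodalWeight {d k : ℕ} (x y : ℕ → ℝ)
    (hk : k ∈ Icc 1 d) :
    muWeight d x y k = (Lagrange.nodal (Icc 1 (d - 1)) y).eval (x k) *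
      Lagrange.nodalWeight (Icc 1 d) x k := by
  rw [mem_Icc] at hk
  have hshift : ∏ j ∈ Icc (k + 1) d, (x k - y (j - 1)) = ∏ i ∈ Icc k (d - 1), (x k - y i) := by
    rw [← Nat.sub_add_cancel (by omega : 1 ≤ d), ← map_add_right_Icc, prod_map]
    simp
  have hy : Icc 1 (d - 1) = Icc 1 (k - 1) ∪ Icc k (d - 1) := by ext; simp; omega
  have hx : (Icc 1 d).erase k = Icc 1 (k - 1) ∪ Icc (k + 1) d := by ext; simp; omega
  rw [muWeight, Lagrange.eval_nodal, Lagrange.nodalWeight, hy, hx,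
    prod_union (disjoint_left.2 (by simp; omega)), prod_union (disjoint_left.2 (by simp; omega)),
    ← hshift]
  simp only [div_eq_mul_inv, prod_mul_distrib]
  ring

theorem strictMonoOn_of_interlacing {d : ℕ} {x y : ℕ → ℝ}
    (hinter : ∀ m, 1 ≤ m → m ≤ d - 1 → x m < y m ∧ y m < x (m + 1)) :
    StrictMonoOn x (Set.Icc 1 d) := by
  refine strictMonoOn_of_lt_add_one Set.ordConnected_Icc fun m _ hm hm1 => ?_
  obtain ⟨hxy, hyx⟩ := hinter m hm.1 (by simp at hm1; omega)
  exact hxy.trans hyx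

theorem two_mul_area_add_sq {R : Type*} [CommRing R] (x y : ℕ → R) (n : ℕ) :
    2 * ∑ i ∈ Icc 1 (n + 1), ∑ j ∈ Icc (i + 1) (n + 1), (y i - x i) * (x j - y (j - 1)) +
      (∑ i ∈ Icc 1 (n + 1), x i - ∑ i ∈ Icc 1 n, y i) ^ 2 =
    ∑ i ∈ Icc 1 (n + 1), x i ^ 2 - ∑ i ∈ Icc 1 n, y i ^ 2 := by
  induction n with
  | zero => simp
  | succ n ih =>
    have hlast : ∑ i ∈ Icc 1 (n + 1 + 1), ∑ j ∈ Icc (i + 1) (n + 1 + 1),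
          (y i - x i) * (x j - y (j - 1)) =
        ∑ i ∈ Icc 1 (n + 1), ∑ j ∈ Icc (i + 1) (n + 1), (y i - x i) * (x j - y (j - 1)) +
          (∑ i ∈ Icc 1 (n + 1), (y i - x i)) * (x (n + 1 + 1) - y (n + 1)) := by
      rw [sum_Icc_succ_top (by omega), Icc_eq_empty (a := n + 1 + 1 + 1) (by omega), sum_empty,
        add_zero, sum_mul, ← sum_add_distrib]
      refine sum_congr rfl fun i hi => ?_
      rw [sum_Icc_succ_top (by simp at hi; omega), Nat.add_sub_cancel]
    rw [hlast, sum_sub_distrib, sum_Icc_succ_top (b := n + 1) (f := x) (by omega),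
      sum_Icc_succ_top (b := n + 1) (f := fun i => x i ^ 2) (by omega),
      sum_Icc_succ_top (b := n) (f := y) (by omega),
      sum_Icc_succ_top (b := n) (f := fun i => y i ^ 2) (by omega)]
    linear_combination ih

theorem transition_mean_and_variance_general (d : ℕ) (x y : ℕ → ℝ)
    (hinter : ∀ m, 1 ≤ m → m ≤ d - 1 → x m < y m ∧ y m < x (m + 1)) :
    (∑ k ∈ Finset.Icc 1 d, x k * muWeight d x y k =
        ∑ k ∈ Finset.Icc 1 d, x k - ∑ k ∈ Finset.Icc 1 (d - 1), y k) ∧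
    (∑ k ∈ Finset.Icc 1 d, x k ^ 2 * muWeight d x y k -
        (∑ k ∈ Finset.Icc 1 d, x k * muWeight d x y k) ^ 2 =
      ∑ i ∈ Finset.Icc 1 d, ∑ j ∈ Finset.Icc (i + 1) d, (y i - x i) * (x j - y (j - 1))) := by
  rcases d with _ | n
  · simp
  have hinj : Set.InjOn x (Icc 1 (n + 1)) := by
    simpa using (strictMonoOn_of_interlacing hinter).injOn
  have hcard : #(Icc 1 (n + 1)) = #(Icc 1 n) + 1 := by simp
  have hμ : ∀ f : ℕ → ℝ, ∑ k ∈ Icc 1 (n + 1), f k * muWeight (n + 1) x y k =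
      ∑ k ∈ Icc 1 (n + 1), f k * ((Lagrange.nodal (Icc 1 n) y).eval (x k) *
        Lagrange.nodalWeight (Icc 1 (n + 1)) x k) :=
    fun f => sum_congr rfl fun k hk => by
      rw [muWeight_eq_eval_nodal_mul_nodalWeight x y hk, Nat.add_sub_cancel]
  have hmean := Lagrange.sum_mul_eval_nodal_mul_nodalWeight (u := y) hinj hcard
  have hsecond := Lagrange.sum_sq_mul_eval_nodal_mul_nodalWeight (u := y) hinj hcard
  rw [Nat.add_sub_cancel, hμ, hμ, hmean, hsecond]
  refine ⟨rfl, ?_⟩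
  linear_combination -(two_mul_area_add_sq x y n) / 2

/-- For interlacing sequences `x₁ < y₁ < x₂ < ⋯ < x_{d−1} < y_{d−1} < x_d` with transition
weights `μ_k`, center `c = ∑ x_k − ∑ y_k` and area `A = ∑_{i<j} (y_i−x_i)(x_j−y_{j-1})`:
the mean of the transition distribution is `∑ x_k μ_k = c` and its variance is
`∑ x_k² μ_k − (∑ x_k μ_k)² = A`. -/
theorem transition_mean_and_variance (d : ℕ) (hd : 1 ≤ d) (x y : ℕ → ℝ)
    (hinter : ∀ m, 1 ≤ m → m ≤ d - 1 → x m < y m ∧ y m < x (m + 1)) :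
    (∑ k ∈ Finset.Icc 1 d, x k * muWeight d x y k =
        ∑ k ∈ Finset.Icc 1 d, x k - ∑ k ∈ Finset.Icc 1 (d - 1), y k) ∧
    (∑ k ∈ Finset.Icc 1 d, x k ^ 2 * muWeight d x y k -
        (∑ k ∈ Finset.Icc 1 d, x k * muWeight d x y k) ^ 2 =
      ∑ i ∈ Finset.Icc 1 d, ∑ j ∈ Finset.Icc (i + 1) d, (y i - x i) * (x j - y (j - 1))) :=
  transition_mean_and_variance_general d x y hinter
end

section
/- Let x_1 < y_1 < x_2 < ⋯ < x_{d-1} < y_{d-1} < x_d be a pair of interlacing sequences. Then ∑_{k=1}^{d-1} (x_d − y_k)(y_k − x_1) · ∏_{i=1}^{k-1} (y_k − x_{i+1})/(y_k − y_i) · ∏_{j=k+1}^{d-1} (y_k − x_j)/(y_k − y_j) = ∑_{1 ≤ i < j ≤ d} (y_i − x_i)(x_j − y_{j-1}); that is, the co-transition weights ν_k, given explicitly by the products on the left, sum to the area A of the pair, so the numbers ν_k/A form a probability distribution. -/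
open Finset Polynomial in
private lemma prodXC_monic (n : ℕ) (z : ℕ → ℝ) :
    (∏ i ∈ Icc 1 n, (X - C (z i))).Monic :=
  monic_prod_of_monic _ _ fun _ _ => monic_X_sub_C _

open Finset Polynomial in
private lemma prodXC_natDegree (n : ℕ) (z : ℕ → ℝ) :
    (∏ i ∈ Icc 1 n, (X - C (z i))).natDegree = n := by
  rw [natDegree_prod _ _ fun i _ => X_sub_C_ne_zero _]
  simp [natDegree_X_sub_C]

open Finset Polynomial in
private lemma prodXC_coeff_top (n : ℕ) (z : ℕ → ℝ) :
    (∏ i ∈ Icc 1 n, (X - C (z i))).coeff n = 1 := by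
  have h := (prodXC_monic n z).coeff_natDegree
  rwa [prodXC_natDegree] at h

open Finset Polynomial in
private lemma prodXC_coeff_zero_of_gt (n m : ℕ) (h : n < m) (z : ℕ → ℝ) :
    (∏ i ∈ Icc 1 n, (X - C (z i))).coeff m = 0 := by
  apply coeff_eq_zero_of_natDegree_lt
  rwa [prodXC_natDegree]

open Finset Polynomial in
private lemma prodXC_coeff_sub_one (n : ℕ) (z : ℕ → ℝ) :
    (∏ i ∈ Icc 1 (n+1), (X - C (z i))).coeff n = -∑ i ∈ Icc 1 (n+1), z i := by
  induction n with
  | zero => simp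
  | succ n ih =>
    rw [prod_Icc_succ_top (by omega), coeff_mul_X_sub_C, ih, prodXC_coeff_top,
      show ∑ i ∈ Icc 1 (n+1+1), z i = (∑ i ∈ Icc 1 (n+1), z i) + z (n+1+1) from
        sum_Icc_succ_top (by omega) z]
    ring

open Finset Polynomial in
private lemma prodXC_coeff_sub_two (n : ℕ) (z : ℕ → ℝ) :
    (∏ i ∈ Icc 1 (n+2), (X - C (z i))).coeff n =
      ∑ i ∈ Icc 1 (n+2), ∑ j ∈ Icc (i+1) (n+2), z i * z j := by
  induction n with
  | zero =>
    rw [show (Icc 1 2 : Finset ℕ) = {1, 2} from rfl]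
    simp [mul_comm]
  | succ n ih =>
    rw [prod_Icc_succ_top (by omega), coeff_mul_X_sub_C, ih, prodXC_coeff_sub_one]
    rw [sum_Icc_succ_top (by omega : 1 ≤ n + 3)]
    rw [show Icc (n+3+1) (n+3) = (∅ : Finset ℕ) from Finset.Icc_eq_empty (by omega)]
    rw [Finset.sum_empty, add_zero]
    have hsplit : ∀ i ∈ Icc 1 (n+2), ∑ j ∈ Icc (i+1) (n+3), z i * z j
        = (∑ j ∈ Icc (i+1) (n+2), z i * z j) + z i * z (n+3) := by
      intro i hi
      simp only [mem_Icc] at hi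
      rw [sum_Icc_succ_top (by omega)]
    rw [Finset.sum_congr rfl hsplit, Finset.sum_add_distrib, ← Finset.sum_mul]
    ring

open Finset in
private lemma sum2_succ (n : ℕ) (g : ℕ → ℕ → ℝ) :
    ∑ i ∈ Icc 1 (n+1), ∑ j ∈ Icc (i+1) (n+1), g i j =
      (∑ i ∈ Icc 1 n, ∑ j ∈ Icc (i+1) n, g i j) + ∑ i ∈ Icc 1 n, g i (n+1) := by
  rw [sum_Icc_succ_top (by omega : 1 ≤ n + 1)]
  rw [show Icc (n+1+1) (n+1) = (∅ : Finset ℕ) from Finset.Icc_eq_empty (by omega)]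
  rw [Finset.sum_empty, add_zero]
  have hsplit : ∀ i ∈ Icc 1 n, ∑ j ∈ Icc (i+1) (n+1), g i j
      = (∑ j ∈ Icc (i+1) n, g i j) + g i (n+1) := by
    intro i hi
    simp only [mem_Icc] at hi
    rw [sum_Icc_succ_top (by omega)]
  rw [Finset.sum_congr rfl hsplit, Finset.sum_add_distrib]

open Finset in
private lemma area_formula (m : ℕ) (x y : ℕ → ℝ) :
    ∑ i ∈ Icc 1 (m+1), ∑ j ∈ Icc (i+1) (m+1), (y i - x i) * (x j - y (j-1)) =
      (∑ i ∈ Icc 1 m, ∑ j ∈ Icc (i+1) m, y i * y j)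
      - (∑ i ∈ Icc 1 (m+1), ∑ j ∈ Icc (i+1) (m+1), x i * x j)
      + (∑ i ∈ Icc 1 m, y i) * ((∑ i ∈ Icc 1 (m+1), x i) - ∑ i ∈ Icc 1 m, y i) := by
  induction m with
  | zero => simp
  | succ m ih =>
    rw [sum2_succ (m+1) (fun i j => (y i - x i) * (x j - y (j-1))),
      sum2_succ m (fun i j => y i * y j),
      sum2_succ (m+1) (fun i j => x i * x j), ih]
    simp only [Nat.add_sub_cancel]
    rw [show ∑ i ∈ Icc 1 (m+1), x i = (∑ i ∈ Icc 1 m, x i) + x (m+1) from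
        sum_Icc_succ_top (by omega) x,
      show ∑ i ∈ Icc 1 (m+1), y i = (∑ i ∈ Icc 1 m, y i) + y (m+1) from
        sum_Icc_succ_top (by omega) y,
      show ∑ i ∈ Icc 1 (m+1+1), x i = ((∑ i ∈ Icc 1 m, x i) + x (m+1)) + x (m+1+1) by
        rw [sum_Icc_succ_top (by omega) x, sum_Icc_succ_top (by omega) x],
      show ∑ i ∈ Icc 1 (m+1), (y i - x i) * (x (m+1+1) - y (m+1))
          = ((∑ i ∈ Icc 1 m, y i) + y (m+1) - ((∑ i ∈ Icc 1 m, x i) + x (m+1)))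
            * (x (m+1+1) - y (m+1)) by
        rw [← Finset.sum_mul, Finset.sum_sub_distrib,
          sum_Icc_succ_top (by omega) y, sum_Icc_succ_top (by omega) x],
      show ∑ i ∈ Icc 1 m, y i * y (m+1) = (∑ i ∈ Icc 1 m, y i) * y (m+1) from
        (Finset.sum_mul ..).symm,
      show ∑ i ∈ Icc 1 (m+1), x i * x (m+1+1) = ((∑ i ∈ Icc 1 m, x i) + x (m+1)) * x (m+1+1) by
        rw [← Finset.sum_mul, sum_Icc_succ_top (by omega) x]]
    ring

open Finset Polynomial in
private lemma key_interp (e : ℕ) (x y : ℕ → ℝ)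
    (hinj : Set.InjOn y ↑(Icc 1 (e+1))) :
    ∑ k ∈ Icc 1 (e+1), (∏ i ∈ Icc 1 (e+2), (y k - x i)) *
        ∏ j ∈ (Icc 1 (e+1)).erase k, (y k - y j)⁻¹ =
      (∑ i ∈ Icc 1 (e+2), ∑ j ∈ Icc (i+1) (e+2), x i * x j)
      - (∑ i ∈ Icc 1 (e+1), ∑ j ∈ Icc (i+1) (e+1), y i * y j)
      + (((∑ i ∈ Icc 1 (e+1), y i) - ∑ i ∈ Icc 1 (e+2), x i) * ∑ i ∈ Icc 1 (e+1), y i) := by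
  set c : ℝ := (∑ i ∈ Icc 1 (e+1), y i) - ∑ i ∈ Icc 1 (e+2), x i with hc
  set P : ℝ[X] := ∏ i ∈ Icc 1 (e+2), (X - C (x i)) with hP
  set Q : ℝ[X] := ∏ i ∈ Icc 1 (e+1), (X - C (y i)) with hQ
  set f : ℝ[X] := P - (X + C c) * Q with hf
  have hcard : (Icc 1 (e+1)).card = e + 1 := by simp
  have hdeg : f.degree < (((Icc 1 (e+1)).card : ℕ) : WithBot ℕ) := by
    rw [hcard, degree_lt_iff_coeff_zero]
    intro m hm
    obtain ⟨mm, rfl⟩ : ∃ mm, m = mm + 1 := ⟨m - 1, by omega⟩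
    have hXQ : ((X + C c) * Q).coeff (mm+1) = Q.coeff mm + c * Q.coeff (mm+1) := by
      rw [add_mul, coeff_add, coeff_X_mul, coeff_C_mul]
    rw [hf, coeff_sub, hXQ]
    by_cases h1 : mm = e
    · rw [h1, hP, hQ, show e+2 = e+1+1 from rfl, prodXC_coeff_sub_one, prodXC_coeff_sub_one,
        prodXC_coeff_top, hc]
      ring
    · by_cases h2 : mm = e + 1
      · rw [h2, hP, hQ, show e+1+1 = e+2 from rfl, prodXC_coeff_top, prodXC_coeff_top,
          prodXC_coeff_zero_of_gt (e+1) (e+2) (by omega)]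
        ring
      · rw [hP, hQ, prodXC_coeff_zero_of_gt (e+2) (mm+1) (by omega),
          prodXC_coeff_zero_of_gt (e+1) mm (by omega),
          prodXC_coeff_zero_of_gt (e+1) (mm+1) (by omega)]
        ring
  have hQeval : ∀ k ∈ Icc 1 (e+1), Q.eval (y k) = 0 := by
    intro k hk
    rw [hQ, eval_prod]
    exact Finset.prod_eq_zero hk (by simp)
  have heval : ∀ k ∈ Icc 1 (e+1), f.eval (y k) = ∏ i ∈ Icc 1 (e+2), (y k - x i) := by
    intro k hk
    rw [hf, eval_sub, eval_mul, hQeval k hk, mul_zero, sub_zero, hP, eval_prod]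
    simp
  have hbasis : ∀ k ∈ Icc 1 (e+1), (Lagrange.basis (Icc 1 (e+1)) y k).coeff e
      = ∏ j ∈ (Icc 1 (e+1)).erase k, (y k - y j)⁻¹ := by
    intro k hk
    obtain ⟨p, hp⟩ : ∃ p, p = Lagrange.basis (Icc 1 (e+1)) y k := ⟨_, rfl⟩
    have hnd : p.natDegree = e := by
      rw [hp, Lagrange.natDegree_basis hinj hk, hcard]
      omega
    have h1 : p.coeff e = p.leadingCoeff := hnd ▸ coeff_natDegree
    rw [← hp, h1, hp]
    unfold Lagrange.basis
    rw [leadingCoeff_prod]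
    apply Finset.prod_congr rfl
    intro j hj
    have hjk : j ≠ k := (Finset.mem_erase.mp hj).1
    have hjs : j ∈ Icc 1 (e+1) := (Finset.mem_erase.mp hj).2
    unfold Lagrange.basisDivisor
    rw [leadingCoeff_mul, leadingCoeff_C, (monic_X_sub_C (y j)).leadingCoeff, mul_one]
  have hfi := Lagrange.eq_interpolate (s := Icc 1 (e+1)) (v := y) hinj hdeg
  have hco := congrArg (fun p : ℝ[X] => p.coeff e) hfi
  simp only [Lagrange.interpolate_apply, finset_sum_coeff, coeff_C_mul] at hco
  have hXQ0 : (X * Q).coeff e = ∑ i ∈ Icc 1 (e+1), ∑ j ∈ Icc (i+1) (e+1), y i * y j := by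
    cases e with
    | zero =>
      rw [mul_coeff_zero, coeff_X_zero, zero_mul]
      have h01 : (Icc (1+1) (0+1) : Finset ℕ) = ∅ := Finset.Icc_eq_empty (by omega)
      simp [h01]
    | succ e' =>
      rw [coeff_X_mul, hQ, show e'+1+1 = e'+2 from rfl, prodXC_coeff_sub_two]
  have hfc : f.coeff e = (∑ i ∈ Icc 1 (e+2), ∑ j ∈ Icc (i+1) (e+2), x i * x j)
      - ((∑ i ∈ Icc 1 (e+1), ∑ j ∈ Icc (i+1) (e+1), y i * y j)
        + c * (-∑ i ∈ Icc 1 (e+1), y i)) := by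
    rw [hf, coeff_sub, add_mul, coeff_add, coeff_C_mul, hXQ0, hP, hQ,
      prodXC_coeff_sub_two, prodXC_coeff_sub_one]
  calc ∑ k ∈ Icc 1 (e+1), (∏ i ∈ Icc 1 (e+2), (y k - x i)) *
        ∏ j ∈ (Icc 1 (e+1)).erase k, (y k - y j)⁻¹
      = f.coeff e := by
        rw [hco]
        exact (Finset.sum_congr rfl fun k hk => by rw [heval k hk, hbasis k hk]).symm
    _ = _ := by rw [hfc]; ring

/-- The co-transition weight `ν_k = (x_d−y_k)(y_k−x_1) ∏_{i=1}^{k-1} (y_k−x_{i+1})/(y_k−y_i) ·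
∏_{j=k+1}^{d-1} (y_k−x_j)/(y_k−y_j)`. -/
noncomputable def nuWeight (d : ℕ) (x y : ℕ → ℝ) (k : ℕ) : ℝ :=
  (x d - y k) * (y k - x 1) *
    (∏ i ∈ Finset.Icc 1 (k - 1), (y k - x (i + 1)) / (y k - y i)) *
    ∏ j ∈ Finset.Icc (k + 1) (d - 1), (y k - x j) / (y k - y j)

open Finset in
private lemma nuWeight_eq (e : ℕ) (x y : ℕ → ℝ) (k : ℕ) (hk1 : 1 ≤ k) (hk2 : k ≤ e + 1) :
    nuWeight (e+2) x y k = -((∏ i ∈ Icc 1 (e+2), (y k - x i)) *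
      ∏ j ∈ (Icc 1 (e+1)).erase k, (y k - y j)⁻¹) := by
  have hshift : ∏ i ∈ Icc 1 (k-1), (y k - x (i+1)) = ∏ i ∈ Icc 2 k, (y k - x i) := by
    rw [show (Icc 2 k : Finset ℕ) = Icc (1+1) (k-1+1) by rw [show k-1+1 = k from by omega],
      ← Finset.map_add_right_Icc, Finset.prod_map]
    rfl
  have hdisj : Disjoint (Icc 2 k) (Icc (k+1) (e+1)) := by
    rw [Finset.disjoint_left]
    intro a ha hb
    simp only [mem_Icc] at ha hb
    omega
  have hunion : Icc 2 k ∪ Icc (k+1) (e+1) = Icc 2 (e+1) := by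
    ext a
    simp only [mem_union, mem_Icc]
    omega
  have hsplitN : ∏ i ∈ Icc 1 (e+2), (y k - x i)
      = (y k - x 1) * ((∏ i ∈ Icc 2 k, (y k - x i)) * ∏ i ∈ Icc (k+1) (e+1), (y k - x i))
        * (y k - x (e+2)) := by
    rw [← Finset.prod_union hdisj, hunion,
      show (e:ℕ)+2 = e+1+1 from rfl, prod_Icc_succ_top (by omega),
      show (Icc 1 (e+1) : Finset ℕ) = insert 1 (Icc 2 (e+1)) by
        ext a; simp only [mem_insert, mem_Icc]; omega,
      Finset.prod_insert (by simp)]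
  have hdisj2 : Disjoint (Icc 1 (k-1)) (Icc (k+1) (e+1)) := by
    rw [Finset.disjoint_left]
    intro a ha hb
    simp only [mem_Icc] at ha hb
    omega
  have herase : (Icc 1 (e+1)).erase k = Icc 1 (k-1) ∪ Icc (k+1) (e+1) := by
    ext a
    simp only [mem_erase, mem_union, mem_Icc]
    omega
  have hD : ∏ j ∈ (Icc 1 (e+1)).erase k, (y k - y j)⁻¹
      = (∏ i ∈ Icc 1 (k-1), (y k - y i)⁻¹) * ∏ j ∈ Icc (k+1) (e+1), (y k - y j)⁻¹ := by
    rw [herase, Finset.prod_union hdisj2]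
  unfold nuWeight
  simp only [show e+2-1 = e+1 from rfl, div_eq_mul_inv, Finset.prod_mul_distrib]
  rw [hshift, hD, hsplitN]
  ring

/-- For interlacing sequences `x₁ < y₁ < x₂ < ⋯ < x_{d−1} < y_{d−1} < x_d`, the co-transition
weights `ν_k` are nonnegative and sum to the area `A = ∑_{1≤i<j≤d} (y_i − x_i)(x_j − y_{j-1})`,
so the numbers `ν_k/A` form a probability distribution. -/
theorem nu_sum_eq_area (d : ℕ) (hd : 1 ≤ d) (x y : ℕ → ℝ)
    (hinter : ∀ m, 1 ≤ m → m ≤ d - 1 → x m < y m ∧ y m < x (m + 1)) :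
    (∑ k ∈ Finset.Icc 1 (d - 1), nuWeight d x y k =
      ∑ i ∈ Finset.Icc 1 d, ∑ j ∈ Finset.Icc (i + 1) d, (y i - x i) * (x j - y (j - 1))) ∧
    (∀ k ∈ Finset.Icc 1 (d - 1), 0 ≤ nuWeight d x y k) := by
  classical
  have hyx : ∀ m, 1 ≤ m → m ≤ d - 1 → ∀ n, m < n → n ≤ d → y m < x n := by
    intro m hm hmd n
    induction n with
    | zero => omega
    | succ n ih =>
      intro hlt hle
      rcases Nat.lt_or_ge m n with h | h
      · have h1 : y m < x n := ih (by omega) (by omega)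
        have h2 : x n < y n := (hinter n (by omega) (by omega)).1
        have h3 : y n < x (n+1) := (hinter n (by omega) (by omega)).2
        linarith
      · have hmn : m = n := by omega
        subst hmn
        exact (hinter m hm hmd).2
  have hxy : ∀ m n, 1 ≤ m → m ≤ n → n ≤ d - 1 → x m < y n := by
    intro m n hm hmn hnd
    rcases eq_or_lt_of_le hmn with h | h
    · subst h; exact (hinter m hm hnd).1
    · have h1 : x m < y m := (hinter m hm (by omega)).1
      have h2 : y m < x n := hyx m hm (by omega) n h (by omega)
      have h3 : x n < y n := (hinter n (by omega) hnd).1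
      linarith
  have hyy : ∀ m n, 1 ≤ m → m < n → n ≤ d - 1 → y m < y n := by
    intro m n hm hmn hnd
    have h2 : y m < x n := hyx m hm (by omega) n hmn (by omega)
    have h3 : x n < y n := (hinter n (by omega) hnd).1
    linarith
  constructor
  · rcases Nat.lt_or_ge d 2 with hd2 | hd2
    · have hd1 : d = 1 := by omega
      subst hd1
      rw [show (1:ℕ)-1 = 0 from rfl,
        show (Finset.Icc 1 0 : Finset ℕ) = ∅ from Finset.Icc_eq_empty (by omega),
        Finset.sum_empty, Finset.Icc_self, Finset.sum_singleton,
        show (Finset.Icc 2 1 : Finset ℕ) = ∅ from Finset.Icc_eq_empty (by omega),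
        Finset.sum_empty]
    · obtain ⟨e, rfl⟩ : ∃ e, d = e + 2 := ⟨d - 2, by omega⟩
      have hinj : Set.InjOn y ↑(Finset.Icc 1 (e+1)) := by
        intro a ha b hb hab
        simp only [Finset.coe_Icc, Set.mem_Icc] at ha hb
        by_contra hne
        rcases Nat.lt_or_ge a b with h | h
        · exact absurd hab (ne_of_lt (hyy a b ha.1 h (by omega)))
        · have hba : b < a := by omega
          exact absurd hab.symm (ne_of_lt (hyy b a hb.1 hba (by omega)))
      have hsum : ∑ k ∈ Finset.Icc 1 (e+2-1), nuWeight (e+2) x y k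
          = -∑ k ∈ Finset.Icc 1 (e+1), (∏ i ∈ Finset.Icc 1 (e+2), (y k - x i)) *
              ∏ j ∈ (Finset.Icc 1 (e+1)).erase k, (y k - y j)⁻¹ := by
        rw [show (e:ℕ)+2-1 = e+1 from rfl, ← Finset.sum_neg_distrib]
        apply Finset.sum_congr rfl
        intro k hk
        simp only [Finset.mem_Icc] at hk
        exact nuWeight_eq e x y k hk.1 hk.2
      have harea := area_formula (e+1) x y
      rw [show (e:ℕ)+1+1 = e+2 from rfl] at harea
      rw [hsum, key_interp e x y hinj, harea]
      ring
  · intro k hk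
    simp only [Finset.mem_Icc] at hk
    unfold nuWeight
    apply mul_nonneg (mul_nonneg (mul_nonneg _ _) _) _
    · have h := hyx k hk.1 hk.2 d (by omega) le_rfl
      linarith
    · have h := hxy 1 k le_rfl hk.1 hk.2
      linarith
    · apply Finset.prod_nonneg
      intro i hi
      simp only [Finset.mem_Icc] at hi
      apply div_nonneg
      · have h := hxy (i+1) k (by omega) (by omega) hk.2
        linarith
      · have h := hyy i k (by omega) (by omega) hk.2
        linarith
    · apply Finset.prod_nonneg
      intro j hj
      simp only [Finset.mem_Icc] at hj
      rw [div_nonneg_iff]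
      right
      constructor
      · have h := hyx k hk.1 hk.2 j (by omega) (by omega)
        linarith
      · have h := hyy k j hk.1 (by omega) hj.2
        linarith
end
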